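/- arXiv:1311.2437 — 5 statements merged into one kernel-verified Lean document; each statement's English description precedes it below -/
import Mathlib

section
/- For every Tychonoff space X, the space C(X) with the graph topology is α-favorable in the strong Choquet game (i.e., the nonempty player has a winning strategy in the strong Choquet game). -/
open Set Topology

/-- The history of the first `n+1` moves of player One (a play `f`). -/
def oneHist {M : Type*} (f : ℕ → M) (n : ℕ) : List M :=
  List.ofFn (fun i : Fin (n + 1) => f i.val)

/-- The space `(Y, t)` is α-favorable in the strong Choquet game: player Two (α, the
nonempty player) has a strategy `σ`, responding to histories of One's moves
(pairs `(x, U)` with `x ∈ U` open) with open sets, such that (i) against any partial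
legal play of One, the response `V` satisfies `x ∈ V ⊆ U` and `V` is open, and (ii) in
any full legal run (where One's next open set is contained in Two's last response),
the intersection of Two's responses is nonempty. -/
def StrongChoquetAlphaFavorable (Y : Type*) (t : TopologicalSpace Y) : Prop :=
  ∃ σ : List (Y × Set Y) → Set Y,
    (∀ (f : ℕ → Y × Set Y) (n : ℕ),
      (∀ i ≤ n, (f i).1 ∈ (f i).2 ∧ IsOpen[t] (f i).2) →
      (∀ i < n, (f (i + 1)).2 ⊆ σ (oneHist f i)) →
      (f n).1 ∈ σ (oneHist f n) ∧ σ (oneHist f n) ⊆ (f n).2 ∧ IsOpen[t] (σ (oneHist f n))) ∧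
    ∀ f : ℕ → Y × Set Y,
      (∀ i, (f i).1 ∈ (f i).2 ∧ IsOpen[t] (f i).2) →
      (∀ i, (f (i + 1)).2 ⊆ σ (oneHist f i)) →
      (⋂ n, σ (oneHist f n)).Nonempty

/-- The Vietoris topology on the subsets of `Y`. -/
def vietorisTopology (Y : Type*) [TopologicalSpace Y] : TopologicalSpace (Set Y) :=
  TopologicalSpace.generateFrom
    {T | ∃ U : Set Y, IsOpen U ∧ (T = {S | S ⊆ U} ∨ T = {S | (S ∩ U).Nonempty})}

/-- The graph of a continuous real-valued function, as a subset of `X × ℝ`. -/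
def graphOf (X : Type*) [TopologicalSpace X] (f : C(X, ℝ)) : Set (X × ℝ) :=
  {p | p.2 = f p.1}

/-- The graph topology `τ_Γ` on `C(X)`. -/
def graphTopology (X : Type*) [TopologicalSpace X] : TopologicalSpace C(X, ℝ) :=
  TopologicalSpace.induced (graphOf X) (vietorisTopology (X × ℝ))

section Aux

variable {X : Type*} [TopologicalSpace X]

/-- Radius function: (half of) how far the closed vertical interval around `f x` stays in `W`. -/
noncomputable def radGT (f : C(X, ℝ)) (W : Set (X × ℝ)) (x : X) : ℝ :=
  sSup {r : ℝ | r ∈ Set.Icc (0:ℝ) 1 ∧ ∀ s : ℝ, |s - f x| ≤ r → (x, s) ∈ W}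

namespace radGT

variable {f : C(X, ℝ)} {W : Set (X × ℝ)}

lemma setNonempty (hfW : graphOf X f ⊆ W) (x : X) :
    (0:ℝ) ∈ {r : ℝ | r ∈ Set.Icc (0:ℝ) 1 ∧ ∀ s : ℝ, |s - f x| ≤ r → (x, s) ∈ W} := by
  refine ⟨⟨le_refl 0, zero_le_one⟩, fun s hs => ?_⟩
  have : s = f x := by
    have := abs_nonneg (s - f x)
    have h0 : |s - f x| = 0 := le_antisymm hs this
    have := abs_eq_zero.mp h0
    linarith
  subst this
  exact hfW rfl

lemma bddAbove (x : X) :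
    BddAbove {r : ℝ | r ∈ Set.Icc (0:ℝ) 1 ∧ ∀ s : ℝ, |s - f x| ≤ r → (x, s) ∈ W} :=
  ⟨1, fun r hr => hr.1.2⟩

lemma nonneg (hfW : graphOf X f ⊆ W) (x : X) : 0 ≤ radGT f W x :=
  le_csSup (bddAbove x) (setNonempty hfW x)

lemma pos (hW : IsOpen W) (hfW : graphOf X f ⊆ W) (x : X) : 0 < radGT f W x := by
  have hmem : (x, f x) ∈ W := hfW rfl
  have hnhds : W ∈ nhds (x, f x) := hW.mem_nhds hmem
  rw [mem_nhds_prod_iff] at hnhds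
  obtain ⟨u, hu, v, hv, huv⟩ := hnhds
  obtain ⟨ε, hε, hball⟩ := Metric.mem_nhds_iff.mp hv
  set ε' : ℝ := min (ε / 2) 1 with hε'
  have hε'pos : 0 < ε' := lt_min (by linarith) one_pos
  have : ε' ∈ {r : ℝ | r ∈ Set.Icc (0:ℝ) 1 ∧ ∀ s : ℝ, |s - f x| ≤ r → (x, s) ∈ W} := by
    refine ⟨⟨le_of_lt hε'pos, min_le_right _ _⟩, fun s hs => ?_⟩
    have hs' : |s - f x| < ε := lt_of_le_of_lt (hs.trans (min_le_left _ _)) (by linarith)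
    have : s ∈ v := hball (by simpa [Real.dist_eq] using hs')
    exact huv ⟨mem_of_mem_nhds hu, this⟩
  exact lt_of_lt_of_le hε'pos (le_csSup (bddAbove x) this)

lemma spec (hW : IsOpen W) (hfW : graphOf X f ⊆ W) (x : X) {s : ℝ}
    (hs : |s - f x| ≤ radGT f W x / 2) : (x, s) ∈ W := by
  have hpos := pos hW hfW x
  have hlt : radGT f W x / 2 < radGT f W x := by linarith
  obtain ⟨r', hr', hlt'⟩ := exists_lt_of_lt_csSup ⟨0, setNonempty hfW x⟩ hlt
  exact hr'.2 s (le_of_lt (lt_of_le_of_lt hs hlt'))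

lemma lsc (hW : IsOpen W) (hfW : graphOf X f ⊆ W) : LowerSemicontinuous (radGT f W) := by
  intro x₀ c hc
  rcases lt_or_ge c 0 with h | h
  · exact Filter.Eventually.of_forall fun x => lt_of_lt_of_le h (nonneg hfW x)
  · obtain ⟨r', hr', hcr'⟩ := exists_lt_of_lt_csSup ⟨0, setNonempty hfW x₀⟩ hc
    -- the compact segment {x₀} × Icc (f x₀ - r') (f x₀ + r') is inside W
    have hseg : ({x₀} ×ˢ Set.Icc (f x₀ - r') (f x₀ + r')) ⊆ W := by
      rintro ⟨a, s⟩ ⟨ha, hs⟩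
      rcases ha with rfl
      exact hr'.2 s (abs_le.mpr ⟨by linarith [hs.1], by linarith [hs.2]⟩)
    obtain ⟨u, v, hu, hv, hxu, hIv, huv⟩ :=
      generalized_tube_lemma isCompact_singleton isCompact_Icc hW hseg
    set η : ℝ := (r' - c) / 2 with hη
    have hηpos : 0 < η := by linarith
    have hev1 : ∀ᶠ x in nhds x₀, x ∈ u := hu.mem_nhds (hxu rfl)
    have hev2 : ∀ᶠ x in nhds x₀, |f x - f x₀| < η := by
      have : Filter.Tendsto f (nhds x₀) (nhds (f x₀)) := (f.continuous.tendsto x₀)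
      have := this (Metric.ball_mem_nhds (f x₀) hηpos)
      filter_upwards [this] with x hx
      simpa [Real.dist_eq] using hx
    filter_upwards [hev1, hev2] with x hxu' hfx
    set ρ : ℝ := (c + r') / 2 with hρ
    have hρmem : ρ ∈ {r : ℝ | r ∈ Set.Icc (0:ℝ) 1 ∧ ∀ s : ℝ, |s - f x| ≤ r → (x, s) ∈ W} := by
      refine ⟨⟨by linarith, by linarith [hr'.1.2]⟩, fun s hs => ?_⟩
      have habs : |s - f x₀| ≤ r' := by
        have := abs_sub_abs_le_abs_sub s (f x)
        have h1 : |s - f x₀| ≤ |s - f x| + |f x - f x₀| := by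
          have := abs_sub_le s (f x) (f x₀); linarith [this]
        linarith
      have hsv : s ∈ v := hIv (abs_le.mp habs |> fun ⟨h1, h2⟩ => ⟨by linarith, by linarith⟩)
      exact huv ⟨hxu', hsv⟩
    have : ρ ≤ radGT f W x := le_csSup (bddAbove x) hρmem
    linarith

end radGT

end Aux
section Aux2

variable {X : Type*} [TopologicalSpace X]

lemma lsc_min {α : Type*} [TopologicalSpace α] {f g : α → ℝ}
    (hf : LowerSemicontinuous f) (hg : LowerSemicontinuous g) :
    LowerSemicontinuous fun x => min (f x) (g x) := by
  intro x y hy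
  filter_upwards [hf x y (lt_of_lt_of_le hy (min_le_left _ _)),
    hg x y (lt_of_lt_of_le hy (min_le_right _ _))] with z hz1 hz2
  exact lt_min hz1 hz2

lemma lsc_const {α : Type*} [TopologicalSpace α] (c : ℝ) :
    LowerSemicontinuous fun _ : α => c := fun _ y hy => Filter.Eventually.of_forall fun _ => hy

lemma lsc_div_const {α : Type*} [TopologicalSpace α] {f : α → ℝ}
    (hf : LowerSemicontinuous f) {c : ℝ} (hc : 0 < c) :
    LowerSemicontinuous fun x => f x / c := by
  intro x y hy
  have h : y * c < f x := (lt_div_iff₀ hc).mp hy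
  filter_upwards [hf x _ h] with z hz
  exact (lt_div_iff₀ hc).mpr hz

/-- f LSC minus continuous is LSC. -/
lemma lsc_sub_cont {α : Type*} [TopologicalSpace α] {f g : α → ℝ}
    (hf : LowerSemicontinuous f) (hg : Continuous g) :
    LowerSemicontinuous fun x => f x - g x := by
  intro x y hy
  set ε : ℝ := (f x - g x - y) / 2 with hε
  have hy' : y < f x - g x := hy
  have hεpos : 0 < ε := by simp only [hε]; linarith
  have h1 := hf x (y + g x + ε) (by linarith)
  have h2 : ∀ᶠ z in nhds x, |g z - g x| < ε := by
    have := (hg.tendsto x) (Metric.ball_mem_nhds (g x) hεpos)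
    filter_upwards [this] with z hz
    simpa [Real.dist_eq] using hz
  filter_upwards [h1, h2] with z hz1 hz2
  have := abs_lt.mp hz2
  linarith [this.1, this.2]

/-- The open tube of LSC radius around a continuous function is open in `X × ℝ`. -/
lemma tube_isOpen (f : C(X, ℝ)) {δ : X → ℝ} (hδ : LowerSemicontinuous δ) :
    IsOpen {p : X × ℝ | |p.2 - f p.1| < δ p.1} := by
  rw [isOpen_iff_forall_mem_open]
  rintro ⟨x₀, t₀⟩ hp
  simp only [Set.mem_setOf_eq] at hp
  set c : ℝ := (|t₀ - f x₀| + δ x₀) / 2 with hc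
  have h1 : |t₀ - f x₀| < c := by simp only [hc]; linarith
  have h2 : c < δ x₀ := by simp only [hc]; linarith
  have hcont : Continuous fun p : X × ℝ => |p.2 - f p.1| :=
    (continuous_snd.sub (f.continuous.comp continuous_fst)).abs
  have hopen1 : IsOpen {p : X × ℝ | |p.2 - f p.1| < c} := by
    have : IsOpen ((fun p : X × ℝ => |p.2 - f p.1|) ⁻¹' Set.Iio c) :=
      IsOpen.preimage hcont isOpen_Iio
    exact this
  have hopen2 : IsOpen (δ ⁻¹' Set.Ioi c) := hδ.isOpen_preimage c
  refine ⟨{p : X × ℝ | |p.2 - f p.1| < c} ∩ (Prod.fst ⁻¹' (δ ⁻¹' Set.Ioi c)),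
    ?_, hopen1.inter (hopen2.preimage continuous_fst), ⟨h1, h2⟩⟩
  rintro ⟨x, t⟩ ⟨ha, hb⟩
  have ha' : |t - f x| < c := ha
  have hb' : c < δ x := hb
  exact lt_trans ha' hb'

/-- subbasic subset-sets pull back to graph-topology-open sets -/
lemma isOpen_graph_sub (T : Set (X × ℝ)) (hT : IsOpen T) :
    IsOpen[graphTopology X] {g : C(X, ℝ) | graphOf X g ⊆ T} := by
  have h : {g : C(X, ℝ) | graphOf X g ⊆ T} = graphOf X ⁻¹' {S | S ⊆ T} := rfl
  rw [h]
  exact ⟨_, TopologicalSpace.isOpen_generateFrom_of_mem ⟨T, hT, Or.inl rfl⟩, rfl⟩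

/-- The LSC-tube ball around `f` is open in the graph topology. -/
lemma ball_isOpen (f : C(X, ℝ)) {δ : X → ℝ} (hδ : LowerSemicontinuous δ) :
    IsOpen[graphTopology X] {g : C(X, ℝ) | ∀ x, |g x - f x| < δ x} := by
  have heq : {g : C(X, ℝ) | ∀ x, |g x - f x| < δ x}
      = graphOf X ⁻¹' {S | S ⊆ {p : X × ℝ | |p.2 - f p.1| < δ p.1}} := by
    ext g
    constructor
    · rintro hg ⟨x, t⟩ hp
      have : t = g x := hp
      subst this
      exact hg x
    · intro hg x
      exact hg (show ((x, g x) : X × ℝ) ∈ graphOf X g from rfl)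
  rw [heq]
  exact ⟨_, TopologicalSpace.isOpen_generateFrom_of_mem ⟨_, tube_isOpen f hδ, Or.inl rfl⟩, rfl⟩

end Aux2
section Basis

variable {X : Type*} [TopologicalSpace X]

/-- Each Vietoris subbasic set containing a graph contains a "subset-type" neighborhood. -/
lemma subbasic_contains (hT1 : T1Space X) {T : Set (Set (X × ℝ))}
    (hT : T ∈ {T | ∃ U : Set (X × ℝ), IsOpen U ∧
      (T = {S | S ⊆ U} ∨ T = {S | (S ∩ U).Nonempty})})
    {f : C(X, ℝ)} (hfT : graphOf X f ∈ T) :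
    ∃ W : Set (X × ℝ), IsOpen W ∧ graphOf X f ⊆ W ∧
      ∀ g : C(X, ℝ), graphOf X g ⊆ W → graphOf X g ∈ T := by
  obtain ⟨U', hU', hcase⟩ := hT
  rcases hcase with rfl | rfl
  · exact ⟨U', hU', hfT, fun g hg => hg⟩
  · obtain ⟨p, hpf, hpU⟩ := hfT
    have hp2 : p.2 = f p.1 := hpf
    refine ⟨({p.1}ᶜ ×ˢ (Set.univ : Set ℝ)) ∪ U',
      (((isClosed_singleton).isOpen_compl).prod isOpen_univ).union hU', ?_, ?_⟩
    · rintro ⟨x, t⟩ hq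
      have hq2 : t = f x := hq
      by_cases hx : x = p.1
      · right
        have hxt : ((x, t) : X × ℝ) = p := Prod.ext hx (by rw [hq2, hx, hp2])
        rw [hxt]; exact hpU
      · exact Or.inl ⟨hx, trivial⟩
    · intro g hg
      have := hg (show ((p.1, g p.1) : X × ℝ) ∈ graphOf X g from rfl)
      rcases this with h | h
      · exact absurd rfl h.1
      · exact ⟨(p.1, g p.1), rfl, h⟩

/-- Basis lemma: basic graph-topology neighborhoods of the "subset" type. -/
lemma exists_basic [T1Space X] {f : C(X, ℝ)} {U : Set C(X, ℝ)}
    (hfU : f ∈ U) (hU : IsOpen[graphTopology X] U) :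
    ∃ W : Set (X × ℝ), IsOpen W ∧ graphOf X f ⊆ W ∧
      ∀ g : C(X, ℝ), graphOf X g ⊆ W → g ∈ U := by
  classical
  obtain ⟨O, hO, rfl⟩ : ∃ O, IsOpen[vietorisTopology (X × ℝ)] O ∧ graphOf X ⁻¹' O = U := by
    exact hU
  have hb := @TopologicalSpace.isTopologicalBasis_of_subbasis (Set (X × ℝ))
    (vietorisTopology (X × ℝ))
    {T | ∃ U : Set (X × ℝ), IsOpen U ∧ (T = {S | S ⊆ U} ∨ T = {S | (S ∩ U).Nonempty})} rfl
  obtain ⟨b, hbB, hfb, hbO⟩ :=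
    @TopologicalSpace.IsTopologicalBasis.exists_subset_of_mem_open (Set (X × ℝ))
      (vietorisTopology (X × ℝ)) _ hb _ _ hfU hO
  obtain ⟨F, ⟨hFfin, hFsub⟩, rfl⟩ := hbB
  have key : ∀ T : Set (Set (X × ℝ)), ∃ W : Set (X × ℝ), IsOpen W ∧ graphOf X f ⊆ W ∧
      (T ∈ F → ∀ g : C(X, ℝ), graphOf X g ⊆ W → graphOf X g ∈ T) := by
    intro T
    by_cases hT : T ∈ F
    · obtain ⟨W, h1, h2, h3⟩ := subbasic_contains ‹_› (hFsub hT) (hfb T hT)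
      exact ⟨W, h1, h2, fun _ => h3⟩
    · exact ⟨Set.univ, isOpen_univ, Set.subset_univ _, fun h => absurd h hT⟩
  choose w hw1 hw2 hw3 using key
  refine ⟨⋂ T ∈ F, w T, hFfin.isOpen_biInter (fun T _ => hw1 T), ?_, ?_⟩
  · exact Set.subset_iInter₂ fun T _ => hw2 T
  · intro g hg
    have : graphOf X g ∈ ⋂₀ F := by
      intro T hT
      exact hw3 T hT g ((Set.iInter₂_subset T hT).trans' hg)
    exact hbO this

/-- The chosen basic "subset-type" neighborhood. -/
noncomputable def basisW (f : C(X, ℝ)) (U : Set C(X, ℝ)) : Set (X × ℝ) :=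
  haveI := Classical.propDecidable (∃ W : Set (X × ℝ), IsOpen W ∧ graphOf X f ⊆ W ∧
      ∀ g : C(X, ℝ), graphOf X g ⊆ W → g ∈ U)
  if h : ∃ W : Set (X × ℝ), IsOpen W ∧ graphOf X f ⊆ W ∧
      ∀ g : C(X, ℝ), graphOf X g ⊆ W → g ∈ U then h.choose else Set.univ

lemma basisW_spec [T1Space X] {f : C(X, ℝ)} {U : Set C(X, ℝ)}
    (hfU : f ∈ U) (hU : IsOpen[graphTopology X] U) :
    IsOpen (basisW f U) ∧ graphOf X f ⊆ basisW f U ∧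
      ∀ g : C(X, ℝ), graphOf X g ⊆ basisW f U → g ∈ U := by
  have h := exists_basic hfU hU
  have heq : basisW f U = h.choose := by
    rw [basisW]
    exact dif_pos h
  rw [heq]
  exact h.choose_spec

end Basis
section Strategy

variable {X : Type*} [TopologicalSpace X]

lemma oneHist_zero {M : Type*} (f : ℕ → M) : oneHist f 0 = [f 0] := by
  rw [oneHist]
  rw [List.ofFn_succ, List.ofFn_zero]
  rfl

lemma oneHist_succ {M : Type*} (f : ℕ → M) (n : ℕ) :
    oneHist f (n + 1) = (oneHist f n).concat (f (n + 1)) := by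
  rw [oneHist, List.ofFn_succ']
  rfl

lemma oneHist_reverse_succ {M : Type*} (f : ℕ → M) (n : ℕ) :
    (oneHist f (n + 1)).reverse = f (n + 1) :: (oneHist f n).reverse := by
  rw [oneHist_succ, List.concat_eq_append, List.reverse_append]
  rfl

lemma oneHist_length {M : Type*} (f : ℕ → M) (n : ℕ) : (oneHist f n).length = n + 1 := by
  simp [oneHist]

/-- The radius function along a (reversed) history. -/
noncomputable def deltaAux : List (C(X, ℝ) × Set C(X, ℝ)) → X → ℝ
  | [] => fun _ => 1
  | [p] => fun x => min ((2:ℝ)⁻¹ ^ 1) (radGT p.1 (basisW p.1 p.2) x / 2)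
  | p :: q :: rest => fun x =>
      min (min ((2:ℝ)⁻¹ ^ (rest.length + 2)) (radGT p.1 (basisW p.1 p.2) x / 2))
        ((deltaAux (q :: rest) x - |p.1 x - q.1 x|) / 3)

/-- Player Two's strategy. -/
noncomputable def sigmaStrat (X : Type*) [TopologicalSpace X] :
    List (C(X, ℝ) × Set C(X, ℝ)) → Set C(X, ℝ) := fun l =>
  match l.reverse with
  | [] => Set.univ
  | p :: rest => {g : C(X, ℝ) | ∀ x, |g x - p.1 x| < deltaAux (p :: rest) x}

variable {f : ℕ → C(X, ℝ) × Set C(X, ℝ)}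

lemma sigma_eq (f : ℕ → C(X, ℝ) × Set C(X, ℝ)) (n : ℕ) :
    sigmaStrat X (oneHist f n) =
      {g : C(X, ℝ) | ∀ x, |g x - (f n).1 x| < deltaAux ((oneHist f n).reverse) x} := by
  cases n with
  | zero => rw [sigmaStrat, oneHist_zero]; rfl
  | succ m => rw [sigmaStrat, oneHist_reverse_succ]

lemma revHist_shape (f : ℕ → C(X, ℝ) × Set C(X, ℝ)) (n : ℕ) :
    ∃ t, (oneHist f n).reverse = f n :: t ∧ t.length = n := by
  cases n with
  | zero => exact ⟨[], by rw [oneHist_zero]; rfl, rfl⟩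
  | succ m =>
    refine ⟨(oneHist f m).reverse, oneHist_reverse_succ f m, ?_⟩
    rw [List.length_reverse, oneHist_length]

lemma delta_hist_zero (f : ℕ → C(X, ℝ) × Set C(X, ℝ)) :
    deltaAux ((oneHist f 0).reverse) = fun x =>
      min ((2:ℝ)⁻¹ ^ 1) (radGT (f 0).1 (basisW (f 0).1 (f 0).2) x / 2) := by
  rw [oneHist_zero]
  rfl

lemma delta_hist_succ (f : ℕ → C(X, ℝ) × Set C(X, ℝ)) (n : ℕ) :
    deltaAux ((oneHist f (n + 1)).reverse) = fun x =>
      min (min ((2:ℝ)⁻¹ ^ (n + 2)) (radGT (f (n + 1)).1 (basisW (f (n + 1)).1 (f (n + 1)).2) x / 2))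
        ((deltaAux ((oneHist f n).reverse) x - |(f (n + 1)).1 x - (f n).1 x|) / 3) := by
  obtain ⟨t, ht, htl⟩ := revHist_shape f n
  rw [oneHist_reverse_succ, ht]
  cases n with
  | zero =>
    have : t = [] := List.length_eq_zero_iff.mp htl
    subst this
    rfl
  | succ m =>
    obtain ⟨q, t', rfl⟩ : ∃ q t', t = q :: t' := by
      cases t with
      | nil => simp at htl
      | cons q t' => exact ⟨q, t', rfl⟩
    simp only [deltaAux, htl]

end Strategy

section Invariants

variable {X : Type*} [TopologicalSpace X]

lemma delta_pos_lsc [T1Space X] (f : ℕ → C(X, ℝ) × Set C(X, ℝ)) (n : ℕ)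
    (h1 : ∀ i ≤ n, (f i).1 ∈ (f i).2 ∧ IsOpen[graphTopology X] (f i).2)
    (h2 : ∀ i < n, (f (i + 1)).2 ⊆ sigmaStrat X (oneHist f i)) :
    (∀ x, 0 < deltaAux ((oneHist f n).reverse) x) ∧
      LowerSemicontinuous (deltaAux ((oneHist f n).reverse)) := by
  induction n with
  | zero =>
    obtain ⟨hb1, hb2, _⟩ := basisW_spec (h1 0 le_rfl).1 (h1 0 le_rfl).2
    rw [delta_hist_zero]
    refine ⟨fun x => lt_min (by norm_num) (by linarith [radGT.pos hb1 hb2 x]), ?_⟩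
    exact lsc_min (lsc_const _) (lsc_div_const (radGT.lsc hb1 hb2) two_pos)
  | succ m ih =>
    obtain ⟨hpos, hlsc⟩ := ih (fun i hi => h1 i (hi.trans (Nat.le_succ m)))
      (fun i hi => h2 i (hi.trans (Nat.lt_succ_self m)))
    obtain ⟨hb1, hb2, _⟩ := basisW_spec (h1 (m + 1) le_rfl).1 (h1 (m + 1) le_rfl).2
    have hmem : (f (m + 1)).1 ∈ sigmaStrat X (oneHist f m) :=
      h2 m (Nat.lt_succ_self m) (h1 (m + 1) le_rfl).1
    rw [sigma_eq] at hmem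
    rw [delta_hist_succ]
    constructor
    · intro x
      refine lt_min (lt_min (by positivity) (by linarith [radGT.pos hb1 hb2 x])) ?_
      have := hmem x
      linarith
    · refine lsc_min (lsc_min (lsc_const _) (lsc_div_const (radGT.lsc hb1 hb2) two_pos)) ?_
      exact lsc_div_const
        (lsc_sub_cont hlsc (((f (m + 1)).1.continuous.sub (f m).1.continuous).abs))
        (by norm_num)

lemma delta_le_rad [T1Space X] (f : ℕ → C(X, ℝ) × Set C(X, ℝ)) (n : ℕ) (x : X) :
    deltaAux ((oneHist f n).reverse) x
      ≤ radGT (f n).1 (basisW (f n).1 (f n).2) x / 2 := by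
  cases n with
  | zero => rw [delta_hist_zero]; exact min_le_right _ _
  | succ m => rw [delta_hist_succ]; exact (min_le_left _ _).trans (min_le_right _ _)

lemma delta_le_pow (f : ℕ → C(X, ℝ) × Set C(X, ℝ)) (n : ℕ) (x : X) :
    deltaAux ((oneHist f n).reverse) x ≤ (2:ℝ)⁻¹ ^ (n + 1) := by
  cases n with
  | zero => rw [delta_hist_zero]; exact min_le_left _ _
  | succ m => rw [delta_hist_succ]; exact (min_le_left _ _).trans (min_le_left _ _)

lemma delta_rec (f : ℕ → C(X, ℝ) × Set C(X, ℝ)) (n : ℕ) (x : X) :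
    deltaAux ((oneHist f (n + 1)).reverse) x
      ≤ (deltaAux ((oneHist f n).reverse) x - |(f (n + 1)).1 x - (f n).1 x|) / 3 := by
  rw [delta_hist_succ]; exact min_le_right _ _

end Invariants


/-- For every Tychonoff space `X`, the space `C(X)` with the graph topology is
α-favorable in the strong Choquet game. -/
theorem graph_topology_strong_choquet_alpha_favorable
    (X : Type*) [TopologicalSpace X] [T35Space X] :
    StrongChoquetAlphaFavorable C(X, ℝ) (graphTopology X) := by
  classical
  refine ⟨sigmaStrat X, ?_, ?_⟩
  · intro f n h1 h2
    obtain ⟨hpos, hlsc⟩ := delta_pos_lsc f n h1 h2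
    obtain ⟨hb1, hb2, hb3⟩ := basisW_spec (h1 n le_rfl).1 (h1 n le_rfl).2
    refine ⟨?_, ?_, ?_⟩
    · rw [sigma_eq]
      intro x
      simpa using hpos x
    · rw [sigma_eq]
      intro g hg
      apply hb3
      rintro ⟨a, t⟩ hp
      have ht : t = g a := hp
      subst ht
      exact radGT.spec hb1 hb2 a (le_of_lt (lt_of_lt_of_le (hg a) (delta_le_rad f n a)))
    · rw [sigma_eq]
      exact ball_isOpen _ hlsc
  · intro f h1 h2
    set F : ℕ → C(X, ℝ) := fun n => (f n).1 with hF
    set D : ℕ → X → ℝ := fun n => deltaAux ((oneHist f n).reverse) with hD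
    have hpos : ∀ n x, 0 < D n x :=
      fun n => (delta_pos_lsc f n (fun i _ => h1 i) (fun i _ => h2 i)).1
    have hstep : ∀ n x, |F (n + 1) x - F n x| < D n x := by
      intro n x
      have := h2 n (h1 (n + 1)).1
      rw [sigma_eq] at this
      exact this x
    have hsmall : ∀ n x, D n x ≤ (2:ℝ)⁻¹ ^ (n + 1) := fun n x => delta_le_pow f n x
    have hrec : ∀ n x, D (n + 1) x ≤ (D n x - |F (n + 1) x - F n x|) / 3 :=
      fun n x => delta_rec f n x
    -- pointwise limits
    have hcauchy : ∀ x, ∃ L, Filter.Tendsto (fun m => F m x) Filter.atTop (nhds L) := by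
      intro x
      refine cauchySeq_tendsto_of_complete ?_
      refine cauchySeq_of_le_geometric 2⁻¹ 1 (by norm_num) (fun m => ?_)
      rw [Real.dist_eq, abs_sub_comm]
      have h1' := (hstep m x).le.trans (hsmall m x)
      have : ((2:ℝ)⁻¹) ^ (m + 1) ≤ 1 * 2⁻¹ ^ m := by
        rw [pow_succ, one_mul]
        nlinarith [pow_nonneg (by norm_num : (0:ℝ) ≤ 2⁻¹) m]
      linarith
    choose h0 hh0 using hcauchy
    have key : ∀ n x m, n + 1 ≤ m → |F m x - F n x| + D m x ≤ D n x - 2 * D (n + 1) x := by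
      intro n x m hm
      induction m, hm using Nat.le_induction with
      | base =>
        have := hrec n x
        have := hstep n x
        linarith
      | succ m hm ih =>
        have h3 := hrec m x
        have h4 := abs_sub_le (F (m + 1) x) (F m x) (F n x)
        have h5 := hpos (m + 1) x
        have h6 : |F (m + 1) x - F n x| ≤ |F (m + 1) x - F m x| + |F m x - F n x| := h4
        linarith
    have hbound : ∀ n x, |h0 x - F n x| ≤ D n x - 2 * D (n + 1) x := by
      intro n x
      have hlim : Filter.Tendsto (fun m => |F m x - F n x|) Filter.atTop
          (nhds (|h0 x - F n x|)) := ((hh0 x).sub_const (F n x)).abs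
      refine le_of_tendsto hlim ?_
      filter_upwards [Filter.eventually_ge_atTop (n + 1)] with m hm
      have := key n x m hm
      have := hpos m x
      linarith
    have hunif : TendstoUniformly (fun m x => F m x) h0 Filter.atTop := by
      rw [Metric.tendstoUniformly_iff]
      intro ε hε
      obtain ⟨N, hN⟩ := exists_pow_lt_of_lt_one hε (by norm_num : (2:ℝ)⁻¹ < 1)
      filter_upwards [Filter.eventually_ge_atTop N] with m hm x
      rw [Real.dist_eq]
      have hb := hbound m x
      have hp2 := hpos (m + 1) x
      have hsm := hsmall m x
      have hmono : ((2:ℝ)⁻¹) ^ (m + 1) ≤ 2⁻¹ ^ N :=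
        pow_le_pow_of_le_one (by norm_num) (by norm_num) (by omega)
      calc |h0 x - F m x| ≤ D m x - 2 * D (m + 1) x := hb
        _ < (2:ℝ)⁻¹ ^ (m + 1) := by linarith
        _ ≤ (2:ℝ)⁻¹ ^ N := hmono
        _ < ε := hN
    have hcont : Continuous h0 :=
      hunif.continuous (Filter.Eventually.of_forall fun m => (f m).1.continuous).frequently
    refine ⟨⟨h0, hcont⟩, ?_⟩
    rw [Set.mem_iInter]
    intro n
    rw [sigma_eq]
    intro x
    have := hbound n x
    have := hpos (n + 1) x
    show |h0 x - F n x| < D n x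
    linarith
end

section
/- If player Two has a winning strategy in the Menger game on a regular topological space X, then X is an Alster space. -/
open Set

/-- Player Two has a winning strategy in the Menger game on `X`:
there is a strategy `σ` assigning to every finite history of open covers played by One
a finite subfamily of the last cover, such that for every run of the game in which One
plays open covers, Two's moves are legal (finite subsets of the corresponding covers)
and their union covers `X`. -/
def MengerTwoWins (X : Type*) [TopologicalSpace X] : Prop :=
  ∃ σ : List (Set (Set X)) → Finset (Set X),
    ∀ f : ℕ → Set (Set X),
      (∀ n, (∀ U ∈ f n, IsOpen U) ∧ ⋃₀ f n = univ) →
      (∀ n, (↑(σ (oneHist f n)) : Set (Set X)) ⊆ f n) ∧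
      (⋃ n, ⋃₀ (↑(σ (oneHist f n)) : Set (Set X))) = univ

namespace MengerAlster

variable {X : Type*} [TopologicalSpace X]

/-- `c` is an open cover of `X`. -/
def IsOC (c : Set (Set X)) : Prop := (∀ U ∈ c, IsOpen U) ∧ ⋃₀ c = univ

lemma isOC_univ : IsOC ({univ} : Set (Set X)) := by
  constructor
  · rintro U rfl; exact isOpen_univ
  · simp

/-- Realize a list as a history. -/
lemma oneHist_eq {M : Type*} (l : List M) (d : M) (n : ℕ) (h : l.length = n + 1) :
    oneHist (fun j => l.getD j d) n = l := by
  apply List.ext_getElem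
  · simp [oneHist, h]
  · intro i h1 h2
    simp only [oneHist, List.getElem_ofFn]
    exact List.getD_eq_getElem l d h2

section Strategy

variable (σ : List (Set (Set X)) → Finset (Set X))

/-- The winning property of σ. -/
def Wins : Prop :=
  ∀ f : ℕ → Set (Set X),
      (∀ n, (∀ U ∈ f n, IsOpen U) ∧ ⋃₀ f n = univ) →
      (∀ n, (↑(σ (oneHist f n)) : Set (Set X)) ⊆ f n) ∧
      (⋃ n, ⋃₀ (↑(σ (oneHist f n)) : Set (Set X))) = univ

variable {σ}

/-- Legality of σ's response at any finite history of open covers. -/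
lemma legal (hσ : Wins σ) {t : List (Set (Set X))} (ht : ∀ c ∈ t, IsOC c)
    {𝒰 : Set (Set X)} (h𝒰 : IsOC 𝒰) :
    (↑(σ (t ++ [𝒰])) : Set (Set X)) ⊆ 𝒰 := by
  set l : List (Set (Set X)) := t ++ [𝒰] with hl
  set f : ℕ → Set (Set X) := fun j => l.getD j {univ} with hf
  have hlen : l.length = t.length + 1 := by simp [hl]
  have hcov : ∀ n, IsOC (f n) := by
    intro n
    by_cases hn : n < l.length
    · have hfn : f n = l[n] := List.getD_eq_getElem l _ hn
      rw [hfn]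
      have hmem : l[n] ∈ l := List.getElem_mem hn
      rcases List.mem_append.1 hmem with hmem' | hmem'
      · exact ht _ hmem'
      · simp only [List.mem_singleton] at hmem'; rw [hmem']; exact h𝒰
    · have hfn : f n = {univ} := List.getD_eq_default l _ (le_of_not_gt hn)
      rw [hfn]; exact isOC_univ
  have hhist : oneHist f t.length = l := oneHist_eq l {univ} t.length hlen
  have hlast : f t.length = 𝒰 := by
    show l.getD t.length {univ} = 𝒰
    rw [hl, List.getD_append_right t [𝒰] _ _ (le_refl _)]
    simp
  have := (hσ f (fun n => ⟨(hcov n).1, (hcov n).2⟩)).1 t.length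
  rw [hhist, hlast] at this
  exact this

/-- X is Lindelöf: countable subcover from any open cover (via the constant play). -/
lemma lindelof (hσ : Wins σ) {𝒜 : Set (Set X)} (h𝒜 : IsOC 𝒜) :
    ∃ B ⊆ 𝒜, B.Countable ∧ ⋃₀ B = univ := by
  set f : ℕ → Set (Set X) := fun _ => 𝒜 with hf
  have H := hσ f (fun n => ⟨h𝒜.1, h𝒜.2⟩)
  refine ⟨⋃ n, (↑(σ (oneHist f n)) : Set (Set X)), ?_, ?_, ?_⟩
  · exact iUnion_subset fun n => H.1 n
  · exact countable_iUnion fun n => (σ (oneHist f n)).countable_toSet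
  · rw [sUnion_iUnion]; exact H.2

end Strategy

section Kernel

variable [RegularSpace X] {σ : List (Set (Set X)) → Finset (Set X)}

/-- Regularity helper. -/
lemma reg_nbhd {x : X} {U : Set X} (hU : IsOpen U) (hx : x ∈ U) :
    ∃ V : Set X, IsOpen V ∧ x ∈ V ∧ closure V ⊆ U := by
  obtain ⟨s, hs, hscl, hsub⟩ := exists_mem_nhds_isClosed_subset (hU.mem_nhds hx)
  exact ⟨interior s, isOpen_interior, mem_interior_iff_mem_nhds.2 hs,
    (closure_mono interior_subset).trans (by rwa [hscl.closure_eq])⟩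

variable (σ) in
/-- The kernel of the strategy at position `t`. -/
def Ker (t : List (Set (Set X))) : Set X :=
  ⋂ 𝒰 ∈ {c : Set (Set X) | IsOC c}, closure (⋃₀ (↑(σ (t ++ [𝒰])) : Set (Set X)))

lemma ker_closed (t : List (Set (Set X))) : IsClosed (Ker σ t) :=
  isClosed_biInter fun _ _ => isClosed_closure

lemma ker_subset {t : List (Set (Set X))} {𝒰 : Set (Set X)} (h𝒰 : IsOC 𝒰) :
    Ker σ t ⊆ closure (⋃₀ (↑(σ (t ++ [𝒰])) : Set (Set X))) :=
  biInter_subset_of_mem h𝒰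

lemma not_mem_ker {t : List (Set (Set X))} {y : X} (hy : y ∉ Ker σ t) :
    ∃ 𝒰, IsOC 𝒰 ∧ y ∉ closure (⋃₀ (↑(σ (t ++ [𝒰])) : Set (Set X))) := by
  simp only [Ker, mem_iInter, mem_setOf_eq, not_forall] at hy
  obtain ⟨𝒰, h𝒰, hy⟩ := hy
  exact ⟨𝒰, h𝒰, hy⟩

/-- The kernel is compact. -/
lemma ker_compact (hσ : Wins σ) {t : List (Set (Set X))} (ht : ∀ c ∈ t, IsOC c) :
    IsCompact (Ker σ t) := by
  classical
  set K := Ker σ t with hK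
  refine isCompact_of_finite_subcover fun {ι} U hUopen hcov => ?_
  -- Lindelöf: countable subfamily of (range U) ∪ {Kᶜ} covering univ
  have h𝒜 : IsOC (range U ∪ {Kᶜ}) := by
    constructor
    · rintro V (⟨i, rfl⟩ | hV)
      · exact hUopen i
      · simp only [mem_singleton_iff] at hV; rw [hV]; exact (ker_closed t).isOpen_compl
    · apply eq_univ_iff_forall.2
      intro x
      by_cases hx : x ∈ K
      · obtain ⟨i, hi⟩ := mem_iUnion.1 (hcov hx)
        exact ⟨U i, Or.inl ⟨i, rfl⟩, hi⟩
      · exact ⟨Kᶜ, Or.inr rfl, hx⟩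
  obtain ⟨B, hB𝒜, hBc, hBu⟩ := lindelof hσ h𝒜
  set S : Set (Set X) := {V ∈ B | V ∈ range U} with hS
  have hKS : K ⊆ ⋃₀ S := by
    intro x hx
    obtain ⟨V, hVB, hxV⟩ := hBu ▸ (mem_univ x) |> fun h => (eq_univ_iff_forall.1 hBu x)
    rcases hB𝒜 hVB with hVr | hVc
    · exact ⟨V, ⟨hVB, hVr⟩, hxV⟩
    · simp only [mem_singleton_iff] at hVc; rw [hVc] at hxV; exact absurd hx hxV
  rcases S.eq_empty_or_nonempty with hSe | hSne
  · refine ⟨∅, ?_⟩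
    rw [hSe] at hKS; simp only [sUnion_empty] at hKS
    intro x hx; exact absurd (hKS hx) (notMem_empty x)
  · obtain ⟨A, hA⟩ := (hBc.mono (sep_subset _ _)).exists_eq_range hSne
    have hAS : ∀ n, A n ∈ S := fun n => by
      have h1 : A n ∈ range A := mem_range_self n
      rw [← hA] at h1; exact h1
    have hAopen : ∀ n, IsOpen (A n) := fun n => by
      obtain ⟨_, ⟨i, hi⟩⟩ := hAS n; rw [← hi]; exact hUopen i
    set V : ℕ → Set X := fun n => ⋃ j ∈ Finset.range (n + 1), A j with hV
    have hVopen : ∀ n, IsOpen (V n) := fun n =>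
      isOpen_biUnion fun j _ => hAopen j
    have hVmono : ∀ a b, a ≤ b → V a ⊆ V b := by
      intro a b hab x hx
      simp only [hV, mem_iUnion, Finset.mem_range] at hx ⊢
      obtain ⟨j, hj, hxj⟩ := hx
      exact ⟨j, by omega, hxj⟩
    have hKV : ∀ x ∈ K, ∃ n, x ∈ V n := by
      intro x hx
      obtain ⟨W, hWS, hxW⟩ := hKS hx
      have hWA : W ∈ range A := by rw [← hA]; exact hWS
      obtain ⟨n, rfl⟩ := hWA
      exact ⟨n, mem_biUnion (Finset.mem_range.2 (Nat.lt_succ_self n)) hxW⟩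
    by_cases hN : ∃ N, K ⊆ V N
    · obtain ⟨N, hNK⟩ := hN
      -- extract Finset of ι
      have hchoose : ∀ j : ℕ, ∃ i : ι, A j = U i := fun j => by
        obtain ⟨_, ⟨i, hi⟩⟩ := hAS j; exact ⟨i, hi.symm⟩
      choose g hg using hchoose
      refine ⟨(Finset.range (N + 1)).image g, ?_⟩
      intro x hx
      have := hNK hx
      simp only [hV, mem_iUnion, Finset.mem_range] at this
      obtain ⟨j, hj, hxj⟩ := this
      simp only [mem_iUnion, Finset.mem_image, Finset.mem_range]
      exact ⟨g j, ⟨j, hj, rfl⟩, (hg j) ▸ hxj⟩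
    · exfalso
      push_neg at hN
      have hx : ∀ N : ℕ, ∃ x, x ∈ K ∧ x ∉ V N := by
        intro N; obtain ⟨x, hx1, hx2⟩ := not_subset.1 (hN N); exact ⟨x, hx1, hx2⟩
      choose x hxK hxV using hx
      -- the trap cover
      set 𝒟 : Set (Set X) :=
        {O | IsOpen O ∧ ((∃ n, closure O ⊆ V n) ∨ closure O ∩ K = ∅)} with h𝒟
      have h𝒟oc : IsOC 𝒟 := by
        constructor
        · exact fun O hO => hO.1
        · apply eq_univ_iff_forall.2
          intro y
          by_cases hy : y ∈ K
          · obtain ⟨n, hn⟩ := hKV y hy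
            obtain ⟨O, hOopen, hyO, hOcl⟩ := reg_nbhd (hVopen n) hn
            exact ⟨O, ⟨hOopen, Or.inl ⟨n, hOcl⟩⟩, hyO⟩
          · obtain ⟨O, hOopen, hyO, hOcl⟩ := reg_nbhd (ker_closed t).isOpen_compl hy
            refine ⟨O, ⟨hOopen, Or.inr ?_⟩, hyO⟩
            rw [eq_empty_iff_forall_notMem]
            exact fun z hz => (hOcl hz.1) hz.2
      have hresp : (↑(σ (t ++ [𝒟])) : Set (Set X)) ⊆ 𝒟 := legal hσ ht h𝒟oc
      have hKcl : K ⊆ closure (⋃₀ (↑(σ (t ++ [𝒟])) : Set (Set X))) := ker_subset h𝒟oc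
      -- closed superset given by finite union of closures
      set C : Set X := ⋃ s ∈ (↑(σ (t ++ [𝒟])) : Set (Set X)), closure s with hC
      have hCclosed : IsClosed C :=
        (σ (t ++ [𝒟])).finite_toSet.isClosed_biUnion fun _ _ => isClosed_closure
      have hsub : closure (⋃₀ (↑(σ (t ++ [𝒟])) : Set (Set X))) ⊆ C := by
        apply closure_minimal _ hCclosed
        rintro z ⟨s, hs, hzs⟩
        exact mem_biUnion hs (subset_closure hzs)
      -- the max index
      set nof : Set X → ℕ := fun s => if h : ∃ n, closure s ⊆ V n then h.choose else 0
        with hnof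
      set N := (σ (t ++ [𝒟])).sup nof with hN'
      have hxN : x N ∈ C := hsub (hKcl (hxK N))
      simp only [hC, mem_iUnion] at hxN
      obtain ⟨s, hs, hxs⟩ := hxN
      rcases (hresp hs).2 with hex | hcap
      · have hsV : closure s ⊆ V (nof s) := by
          simp only [hnof]; rw [dif_pos hex]; exact hex.choose_spec
        have hle : nof s ≤ N := Finset.le_sup hs
        exact hxV N (hVmono _ _ hle (hsV hxs))
      · rw [eq_empty_iff_forall_notMem] at hcap
        exact hcap (x N) ⟨hxs, hxK N⟩

end Kernel

section Escape

variable [RegularSpace X] {σ : List (Set (Set X)) → Finset (Set X)}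

/-- Countable escape family below an open superset of the kernel. -/
lemma escape (hσ : Wins σ) {t : List (Set (Set X))} (ht : ∀ c ∈ t, IsOC c)
    {W : Set X} (hWopen : IsOpen W) (hKW : Ker σ t ⊆ W) :
    ∃ e : ℕ → Set (Set X), (∀ i, IsOC (e i)) ∧
      ∀ y ∉ W, ∃ i, y ∉ closure (⋃₀ (↑(σ (t ++ [e i])) : Set (Set X))) := by
  classical
  set P : Set X → Prop := fun V =>
    ∃ 𝒰, IsOC 𝒰 ∧ V = (closure (⋃₀ (↑(σ (t ++ [𝒰])) : Set (Set X))))ᶜ with hP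
  set 𝒜 : Set (Set X) := insert W {V | P V} with h𝒜
  have h𝒜oc : IsOC 𝒜 := by
    constructor
    · rintro V (rfl | hV)
      · exact hWopen
      · obtain ⟨𝒰, _, rfl⟩ := hV
        exact isClosed_closure.isOpen_compl
    · apply eq_univ_iff_forall.2
      intro y
      by_cases hy : y ∈ Ker σ t
      · exact ⟨W, mem_insert _ _, hKW hy⟩
      · obtain ⟨𝒰, h𝒰, hy'⟩ := not_mem_ker hy
        exact ⟨_, mem_insert_of_mem _ ⟨𝒰, h𝒰, rfl⟩, hy'⟩
  obtain ⟨B, hB𝒜, hBc, hBu⟩ := lindelof hσ h𝒜oc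
  set pick : Set X → Set (Set X) := fun V => if h : P V then h.choose else {univ} with hpick
  have hpickoc : ∀ V, IsOC (pick V) := by
    intro V
    by_cases h : P V
    · simp only [hpick]; rw [dif_pos h]; exact h.choose_spec.1
    · simp only [hpick]; rw [dif_neg h]; exact isOC_univ
  rcases B.eq_empty_or_nonempty with hBe | hBne
  · refine ⟨fun _ => {univ}, fun _ => isOC_univ, fun y _ => ?_⟩
    exfalso
    rw [hBe] at hBu
    simp only [sUnion_empty] at hBu
    exact (eq_empty_iff_forall_notMem.1 hBu.symm) y (mem_univ y)
  · obtain ⟨A, hA⟩ := hBc.exists_eq_range hBne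
    refine ⟨fun i => pick (A i), fun i => hpickoc (A i), ?_⟩
    intro y hyW
    have hyB : y ∈ ⋃₀ B := hBu.symm ▸ mem_univ y
    obtain ⟨V, hVB, hyV⟩ := hyB
    rcases hB𝒜 hVB with rfl | hVP
    · exact absurd hyV hyW
    · have hVP' : P V := hVP
      have hVA : V ∈ range A := by rw [← hA]; exact hVB
      obtain ⟨i, hi⟩ := hVA
      refine ⟨i, ?_⟩
      show y ∉ closure (⋃₀ (↑(σ (t ++ [pick (A i)])) : Set (Set X)))
      have hpv : pick (A i) = hVP'.choose := by
        rw [hi]; simp only [hpick]; rw [dif_pos hVP']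
      rw [hpv]
      have hVeq := hVP'.choose_spec.2
      rw [hVeq] at hyV
      exact hyV

/-- A Gδ set as a decreasing intersection of open sets. -/
lemma gdelta_seq {G : Set X} (hG : IsGδ G) :
    ∃ u : ℕ → Set X, (∀ k, IsOpen (u k)) ∧ (∀ j k, j ≤ k → u k ⊆ u j) ∧ (⋂ k, u k) = G := by
  obtain ⟨T, hTopen, hTc, rfl⟩ := hG
  have hne : (insert univ T).Nonempty := ⟨univ, mem_insert _ _⟩
  obtain ⟨g, hg⟩ := (hTc.insert univ).exists_eq_range hne
  have hgopen : ∀ j, IsOpen (g j) := by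
    intro j
    have : g j ∈ insert univ T := by rw [hg]; exact mem_range_self j
    rcases this with h | h
    · rw [h]; exact isOpen_univ
    · exact hTopen _ h
  refine ⟨fun k => ⋂ j ∈ Finset.range (k + 1), g j, ?_, ?_, ?_⟩
  · intro k; exact isOpen_biInter_finset fun j _ => hgopen j
  · intro j k hjk x hx
    simp only [mem_iInter, Finset.mem_range] at hx ⊢
    intro m hm; exact hx m (by omega)
  · have h1 : (⋂ k, ⋂ j ∈ Finset.range (k + 1), g j) = ⋂ j, g j := by
      apply Subset.antisymm
      · intro x hx
        simp only [mem_iInter, Finset.mem_range] at hx ⊢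
        intro j; exact hx j j (by omega)
      · intro x hx
        simp only [mem_iInter, Finset.mem_range] at hx ⊢
        intro k j _; exact hx j
    rw [h1]
    have h2 : (⋂ j, g j) = ⋂₀ insert univ T := by rw [hg]; exact (sInter_range g).symm
    rw [h2, sInter_insert, univ_inter]

/-- The main node lemma: a finite subfamily of 𝒢 together with countable escapes. -/
lemma node (hσ : Wins σ) (𝒢 : Set (Set X)) (hGδ : ∀ G ∈ 𝒢, IsGδ G)
    (hk : ∀ K : Set X, IsCompact K → ∃ ℱ ⊆ 𝒢, ℱ.Finite ∧ K ⊆ ⋃₀ ℱ)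
    {t : List (Set (Set X))} (ht : ∀ c ∈ t, IsOC c) :
    ∃ (F : Set (Set X)) (e : ℕ → Set (Set X)), F ⊆ 𝒢 ∧ F.Finite ∧ (∀ i, IsOC (e i)) ∧
      ∀ x, x ∉ ⋃₀ F → ∃ i, x ∉ ⋃₀ (↑(σ (t ++ [e i])) : Set (Set X)) := by
  classical
  obtain ⟨F, hF𝒢, hFfin, hKF⟩ := hk _ (ker_compact hσ ht)
  have hex : ∀ G : Set X, ∃ u : ℕ → Set X,
      G ∈ F → (∀ k, IsOpen (u k)) ∧ (∀ j k, j ≤ k → u k ⊆ u j) ∧ (⋂ k, u k) = G := by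
    intro G
    by_cases hG : G ∈ F
    · obtain ⟨u, h1, h2, h3⟩ := gdelta_seq (hGδ G (hF𝒢 hG))
      exact ⟨u, fun _ => ⟨h1, h2, h3⟩⟩
    · exact ⟨fun _ => univ, fun h => absurd h hG⟩
  choose u hu using hex
  set W : ℕ → Set X := fun k => ⋃ G ∈ F, u G k with hW
  have hWopen : ∀ k, IsOpen (W k) := fun k =>
    isOpen_biUnion fun G hG => ((hu G hG).1 k)
  have hKW : ∀ k, Ker σ t ⊆ W k := by
    intro k z hz
    obtain ⟨G, hGF, hzG⟩ := hKF hz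
    have : z ∈ ⋂ m, u G m := ((hu G hGF).2.2).symm ▸ hzG
    exact mem_biUnion hGF (mem_iInter.1 this k)
  have hesk : ∀ k : ℕ, ∃ e : ℕ → Set (Set X), (∀ i, IsOC (e i)) ∧
      ∀ y ∉ W k, ∃ i, y ∉ closure (⋃₀ (↑(σ (t ++ [e i])) : Set (Set X))) :=
    fun k => escape hσ ht (hWopen k) (hKW k)
  choose es hesoc hes using hesk
  refine ⟨F, fun n => es (Nat.unpair n).1 (Nat.unpair n).2, hF𝒢, hFfin,
    fun n => hesoc _ _, ?_⟩
  intro x hxF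
  -- find a level k with x ∉ W k
  have hklevel : ∃ k, x ∉ W k := by
    by_contra hcon
    push_neg at hcon
    -- pigeonhole: some G ∈ F has infinitely many levels
    have hcover : (univ : Set ℕ) ⊆ ⋃ G ∈ F, {k | x ∈ u G k} := by
      intro k _
      obtain ⟨G, hGF, hxG⟩ := mem_iUnion₂.1 (hcon k)
      exact mem_iUnion₂.2 ⟨G, hGF, hxG⟩
    have hinf : ∃ G ∈ F, {k | x ∈ u G k}.Infinite := by
      by_contra hfin
      push_neg at hfin
      have : (univ : Set ℕ).Finite :=
        Finite.subset (hFfin.biUnion fun G hG => hfin G hG) hcover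
      exact infinite_univ this
    obtain ⟨G, hGF, hGinf⟩ := hinf
    have hxG : x ∈ G := by
      rw [← (hu G hGF).2.2]
      apply mem_iInter.2
      intro k
      obtain ⟨m, hm, hkm⟩ := hGinf.exists_gt k
      exact (hu G hGF).2.1 k m (le_of_lt hkm) hm
    exact hxF ⟨G, hGF, hxG⟩
  obtain ⟨k, hkW⟩ := hklevel
  obtain ⟨i, hi⟩ := hes k x hkW
  refine ⟨Nat.pair k i, ?_⟩
  show x ∉ ⋃₀ (↑(σ (t ++ [es (Nat.unpair (Nat.pair k i)).1 (Nat.unpair (Nat.pair k i)).2])) : Set (Set X))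
  simp only [Nat.unpair_pair]
  exact fun hmem => hi (subset_closure hmem)

end Escape

end MengerAlster

/-- `X` is an Alster space: every cover of `X` by Gδ sets such that every compact subset
of `X` is covered by finitely many of its members has a countable subcover. -/
def AlsterSpace (X : Type*) [TopologicalSpace X] : Prop :=
  ∀ 𝒢 : Set (Set X), (∀ G ∈ 𝒢, IsGδ G) → ⋃₀ 𝒢 = univ →
    (∀ K : Set X, IsCompact K → ∃ ℱ ⊆ 𝒢, ℱ.Finite ∧ K ⊆ ⋃₀ ℱ) →
    ∃ 𝒞 ⊆ 𝒢, 𝒞.Countable ∧ ⋃₀ 𝒞 = univ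

open MengerAlster in
/-- If player Two has a winning strategy in the Menger game on a regular space `X`,
then `X` is an Alster space. -/
theorem menger_two_wins_implies_alster (X : Type*) [TopologicalSpace X] [RegularSpace X]
    (h : MengerTwoWins X) : AlsterSpace X := by
  obtain ⟨σ, hσ⟩ := h
  have hσ' : Wins σ := hσ
  intro 𝒢 hGδ hGcov hk
  classical
  -- node data for every position
  have hnode : ∀ t : List (Set (Set X)), ∃ (F : Set (Set X)) (e : ℕ → Set (Set X)),
      F ⊆ 𝒢 ∧ F.Finite ∧ (∀ i, IsOC (e i)) ∧
      ((∀ c ∈ t, IsOC c) → ∀ x, x ∉ ⋃₀ F →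
        ∃ i, x ∉ ⋃₀ (↑(σ (t ++ [e i])) : Set (Set X))) := by
    intro t
    by_cases ht : ∀ c ∈ t, IsOC c
    · obtain ⟨F, e, h1, h2, h3, h4⟩ := node hσ' 𝒢 hGδ hk ht
      exact ⟨F, e, h1, h2, h3, fun _ => h4⟩
    · exact ⟨∅, fun _ => {univ}, empty_subset _, finite_empty, fun _ => isOC_univ,
        fun hcon => absurd hcon ht⟩
  choose Fn En hF𝒢 hFfin hEoc hEsc using hnode
  -- the tree of positions
  set step : List (Set (Set X)) → ℕ → List (Set (Set X)) := fun t i => t ++ [En t i]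
    with hstep
  set T : List ℕ → List (Set (Set X)) := fun s => s.foldl step [] with hT
  have hTgood : ∀ s : List ℕ, ∀ c ∈ T s, IsOC c := by
    have haux : ∀ (s : List ℕ) (t : List (Set (Set X))), (∀ c ∈ t, IsOC c) →
        ∀ c ∈ s.foldl step t, IsOC c := by
      intro s
      induction s with
      | nil => intro t htc; simpa using htc
      | cons i s' ih =>
        intro t htc
        simp only [List.foldl_cons]
        apply ih
        intro c hc
        rcases List.mem_append.1 hc with h1 | h1
        · exact htc _ h1
        · simp only [List.mem_singleton] at h1; rw [h1]; exact (hEoc t i)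
    intro s
    exact haux s [] (by simp)
  refine ⟨⋃ s : List ℕ, Fn (T s), ?_, ?_, ?_⟩
  · exact iUnion_subset fun s => hF𝒢 (T s)
  · exact countable_iUnion fun s => (hFfin (T s)).countable
  · apply eq_univ_iff_forall.2
    intro x
    by_contra hx
    have hxs : ∀ s : List ℕ, x ∉ ⋃₀ Fn (T s) := by
      intro s hmem
      obtain ⟨V, hVF, hxV⟩ := hmem
      exact hx ⟨V, mem_iUnion.2 ⟨s, hVF⟩, hxV⟩
    have hesc : ∀ s : List ℕ, ∃ i,
        x ∉ ⋃₀ (↑(σ (T s ++ [En (T s) i])) : Set (Set X)) :=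
      fun s => hEsc (T s) (hTgood s) x (hxs s)
    -- the defeating branch
    set B : ℕ → List ℕ :=
      fun n => Nat.rec [] (fun _ prev => prev ++ [(hesc prev).choose]) n with hB
    set f : ℕ → Set (Set X) := fun n => En (T (B n)) ((hesc (B n)).choose) with hf
    have hBsucc : ∀ n, B (n + 1) = B n ++ [(hesc (B n)).choose] := fun n => rfl
    have hTB : ∀ n, T (B (n + 1)) = T (B n) ++ [f n] := by
      intro n
      rw [hBsucc]
      show (B n ++ [(hesc (B n)).choose]).foldl step [] = _
      rw [List.foldl_append]
      rfl
    have hhist : ∀ n, oneHist f n = T (B (n + 1)) := by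
      intro n
      induction n with
      | zero =>
        rw [hTB 0]
        show List.ofFn (fun i : Fin 1 => f i.val) = T (B 0) ++ [f 0]
        have : T (B 0) = [] := rfl
        rw [this]
        rw [show (List.ofFn fun i : Fin 1 => f i.val) = [f 0] from List.ofFn_succ ▸ by simp [List.ofFn_zero]]
        simp
      | succ n ih =>
        have hstep' : oneHist f (n + 1) = oneHist f n ++ [f (n + 1)] := by
          show List.ofFn (fun i : Fin (n + 2) => f i.val) = _
          rw [List.ofFn_succ', List.concat_eq_append]
          congr 1
        rw [hstep', ih, hTB (n + 1)]
    have havoid : ∀ n, x ∉ ⋃₀ (↑(σ (oneHist f n)) : Set (Set X)) := by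
      intro n
      rw [hhist n, hTB n]
      exact (hesc (B n)).choose_spec
    have hfoc : ∀ n, (∀ U ∈ f n, IsOpen U) ∧ ⋃₀ f n = univ := fun n =>
      ⟨(hEoc (T (B n)) _).1, (hEoc (T (B n)) _).2⟩
    have hwin := (hσ f hfoc).2
    have hxu : x ∈ ⋃ n, ⋃₀ (↑(σ (oneHist f n)) : Set (Set X)) := hwin.symm ▸ mem_univ x
    obtain ⟨n, hn⟩ := mem_iUnion.1 hxu
    exact havoid n hn
end

section
/- Every metrizable separable space is a Pytkeev ℵ₀-space, and every Pytkeev ℵ₀-space is an ℵ₀-space; moreover, the inclusion of the class of Pytkeev ℵ₀-spaces in the class of ℵ₀-spaces is proper. -/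
open Set

/-- A Pytkeev network in `X`: a family `𝒬` such that for every `A ⊆ X`, every
`x ∈ cl A` and every open neighbourhood `O` of `x` there is `P ∈ 𝒬` with
`x ∈ P ⊆ O`, and moreover `P ∩ A` is infinite whenever `x` is an accumulation
point of `A`. -/
def IsPytkeevNetwork {X : Type*} [TopologicalSpace X] (𝒬 : Set (Set X)) : Prop :=
  ∀ (A : Set X) (x : X), x ∈ closure A → ∀ O : Set X, IsOpen O → x ∈ O →
    ∃ P ∈ 𝒬, x ∈ P ∧ P ⊆ O ∧ (AccPt x (Filter.principal A) → (P ∩ A).Infinite)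

/-- A Pytkeev ℵ₀-space: a regular space with a countable Pytkeev network. -/
def PytkeevAleph0Space (X : Type*) [TopologicalSpace X] : Prop :=
  RegularSpace X ∧ ∃ 𝒬 : Set (Set X), 𝒬.Countable ∧ IsPytkeevNetwork 𝒬

/-- A k-network in `X`: for every compact `K` and open `U ⊇ K` some finite subfamily
covers `K` and lies in `U`. -/
def IsKNetwork {X : Type*} [TopologicalSpace X] (𝒩 : Set (Set X)) : Prop :=
  ∀ K U : Set X, IsCompact K → IsOpen U → K ⊆ U →
    ∃ ℱ ⊆ 𝒩, ℱ.Finite ∧ K ⊆ ⋃₀ ℱ ∧ ⋃₀ ℱ ⊆ U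

/-- An ℵ₀-space: a regular space with a countable k-network. -/
def Aleph0Space (X : Type*) [TopologicalSpace X] : Prop :=
  RegularSpace X ∧ ∃ 𝒩 : Set (Set X), 𝒩.Countable ∧ IsKNetwork 𝒩

open Filter Topology

/-! ### Auxiliary results -/

/-- In a `T1` space, any neighbourhood of an accumulation point of `A` meets `A` in an
infinite set. -/
lemma accPt_infinite_inter {X : Type*} [TopologicalSpace X] [T1Space X] {A U : Set X} {x : X}
    (h : AccPt x (𝓟 A)) (hU : U ∈ 𝓝 x) : (U ∩ A).Infinite := by
  by_contra hfin
  rw [Set.not_infinite] at hfin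
  have hC : IsClosed ((U ∩ A) \ {x}) := (Set.Finite.diff hfin : ((U ∩ A) \ {x}).Finite).isClosed
  have hV : U ∩ ((U ∩ A) \ {x})ᶜ ∈ 𝓝 x :=
    inter_mem hU (hC.isOpen_compl.mem_nhds (by simp))
  obtain ⟨y, hy, hyx⟩ := accPt_iff_nhds.1 h _ hV
  exact hy.1.2 ⟨⟨hy.1.1, hy.2⟩, hyx⟩

/-- A countable Pytkeev network is a k-network. -/
lemma pytkeev_isKNetwork {X : Type*} [TopologicalSpace X] {𝒬 : Set (Set X)}
    (hc : 𝒬.Countable) (hP : IsPytkeevNetwork 𝒬) : IsKNetwork 𝒬 := by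
  intro K U hK hU hKU
  by_contra hcon
  rcases K.eq_empty_or_nonempty with rfl | ⟨x₀, hx₀⟩
  · exact hcon ⟨∅, empty_subset _, finite_empty, by simp, by simp⟩
  have h𝒬'ne : {P | P ∈ 𝒬 ∧ P ⊆ U}.Nonempty := by
    obtain ⟨P, hP𝒬, _, hPU, _⟩ := hP {x₀} x₀ (subset_closure rfl) U hU (hKU hx₀)
    exact ⟨P, hP𝒬, hPU⟩
  obtain ⟨e, he⟩ := (hc.mono (fun P hP => hP.1 : {P | P ∈ 𝒬 ∧ P ⊆ U} ⊆ 𝒬)).exists_eq_range h𝒬'ne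
  have heQ : ∀ k, e k ∈ 𝒬 ∧ e k ⊆ U := fun k => by
    have : e k ∈ {P | P ∈ 𝒬 ∧ P ⊆ U} := by rw [he]; exact mem_range_self k
    exact this
  have hesc : ∀ n : ℕ, ∃ x ∈ K, ∀ k ≤ n, x ∉ e k := by
    intro n
    by_contra hno
    push_neg at hno
    refine hcon ⟨e '' (Iic n), ?_, (finite_Iic n).image e, ?_, ?_⟩
    · rintro _ ⟨k, _, rfl⟩; exact (heQ k).1
    · intro x hx
      obtain ⟨k, hk, hke⟩ := hno x hx
      exact ⟨e k, ⟨k, hk, rfl⟩, hke⟩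
    · rintro y ⟨_, ⟨k, _, rfl⟩, hy⟩; exact (heQ k).2 hy
  choose u hu1 hu2 using hesc
  have hmap : Filter.map u atTop ≤ 𝓟 K :=
    le_principal_iff.2 (eventually_atTop.2 ⟨0, fun n _ => hu1 n⟩)
  obtain ⟨x, hxK, hcl⟩ := hK.exists_clusterPt hmap
  have hxcl : x ∈ closure (range u) :=
    mem_closure_iff_clusterPt.2 (hcl.mono (le_principal_iff.2 range_mem_map))
  obtain ⟨P, hP𝒬, hxP, hPU, hPinf⟩ := hP (range u) x hxcl U hU (hKU hxK)
  obtain ⟨m, hm⟩ : ∃ m, e m = P := by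
    have : P ∈ {P | P ∈ 𝒬 ∧ P ⊆ U} := ⟨hP𝒬, hPU⟩
    rwa [he, mem_range] at this
  by_cases hacc : AccPt x (𝓟 (range u))
  · have hinf := hPinf hacc
    refine hinf (((finite_Iio m).image u).subset ?_)
    rintro y ⟨hyP, n, rfl⟩
    rcases lt_or_ge n m with h | h
    · exact ⟨n, h, rfl⟩
    · exact absurd (hm ▸ hyP) (hu2 n m h)
  · rw [accPt_iff_nhds] at hacc
    push_neg at hacc
    obtain ⟨V, hV, hVall⟩ := hacc
    have hfreq : ∃ᶠ n in atTop, u n ∈ V :=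
      mapClusterPt_iff_frequently.1 (mapClusterPt_def.2 hcl) V hV
    obtain ⟨n, hnm, hnV⟩ := frequently_atTop.1 hfreq m
    have hunx : u n = x := hVall (u n) ⟨hnV, mem_range_self n⟩
    exact hu2 n m hnm (hm ▸ (hunx ▸ hxP))

/-! ### The counterexample: `ℕ ∪ {∞}` with a free ultrafilter topology -/

/-- The topology on `Option ℕ` in which the naturals are isolated and the neighbourhoods
of `none` are governed by a free ultrafilter on `ℕ`. -/
def ultraTop : TopologicalSpace (Option ℕ) where
  IsOpen U := none ∈ U → some ⁻¹' U ∈ Filter.hyperfilter ℕ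
  isOpen_univ := fun _ => univ_mem
  isOpen_inter := fun U V hU hV h => inter_mem (hU h.1) (hV h.2)
  isOpen_sUnion := fun S hS h => by
    obtain ⟨U, hUS, hnU⟩ := h
    exact mem_of_superset (hS U hUS hnU) (fun n hn => ⟨U, hUS, hn⟩)

lemma ultra_isOpen_of_not_none {U : Set (Option ℕ)} (h : none ∉ U) : IsOpen[ultraTop] U :=
  fun h' => absurd h' h

lemma ultra_preimage_insert (F : Set ℕ) :
    some ⁻¹' (insert none (some '' F)) = F := by
  ext n
  simp [Option.some_injective ℕ |>.mem_set_image]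

lemma ultra_open_insert {F : Set ℕ} (hF : F ∈ Filter.hyperfilter ℕ) :
    IsOpen[ultraTop] (insert none (some '' F)) := by
  intro _
  rw [ultra_preimage_insert]
  exact hF

lemma ultra_closed_insert (F : Set ℕ) :
    @IsClosed _ ultraTop (insert none (some '' F)) := by
  letI := ultraTop
  rw [← isOpen_compl_iff]
  exact ultra_isOpen_of_not_none (by simp)

lemma ultra_mem_nhds {s : Set (Option ℕ)} (hn : none ∈ s)
    (hs : some ⁻¹' s ∈ Filter.hyperfilter ℕ) : s ∈ @nhds _ ultraTop none := by
  refine @mem_nhds_iff _ ultraTop _ _ |>.2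
    ⟨insert none (some '' (some ⁻¹' s)), ?_, ultra_open_insert hs, mem_insert _ _⟩
  rintro x (rfl | ⟨n, hn', rfl⟩)
  · exact hn
  · exact hn'

lemma ultra_nhds_none {s : Set (Option ℕ)} (hs : s ∈ @nhds _ ultraTop none) :
    none ∈ s ∧ some ⁻¹' s ∈ Filter.hyperfilter ℕ := by
  obtain ⟨t, hts, hto, hnt⟩ := @mem_nhds_iff _ ultraTop _ _ |>.1 hs
  exact ⟨hts hnt, mem_of_superset (hto hnt) (preimage_mono hts)⟩

lemma ultra_singleton_open (n : ℕ) : IsOpen[ultraTop] {some n} :=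
  ultra_isOpen_of_not_none (by simp)

lemma ultra_regular : @RegularSpace (Option ℕ) ultraTop := by
  letI := ultraTop
  refine RegularSpace.of_exists_mem_nhds_isClosed_subset ?_
  rintro (_ | n) s hs
  · obtain ⟨hn, htr⟩ := ultra_nhds_none hs
    refine ⟨insert none (some '' (some ⁻¹' s)), ultra_mem_nhds (mem_insert _ _) ?_,
      ultra_closed_insert _, ?_⟩
    · rw [ultra_preimage_insert]; exact htr
    · rintro x (rfl | ⟨k, hk, rfl⟩)
      · exact hn
      · exact hk
  · refine ⟨{some n}, (ultra_singleton_open n).mem_nhds rfl, ?_, ?_⟩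
    · rw [← isOpen_compl_iff]
      refine fun _ => ?_
      have : some ⁻¹' ({some n}ᶜ : Set (Option ℕ)) = {n}ᶜ := by
        ext k; simp
      rw [this]
      exact Filter.hyperfilter_le_cofinite ((Set.finite_singleton n).compl_mem_cofinite)
    · simpa using mem_of_mem_nhds hs

/-- In the ultrafilter space every compact set is finite. -/
lemma ultra_compact_finite {K : Set (Option ℕ)} (hK : @IsCompact _ ultraTop K) : K.Finite := by
  letI := ultraTop
  by_contra hinf
  rw [← Set.not_infinite] at hinf
  push_neg at hinf
  have hS : (some ⁻¹' K).Infinite := by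
    have : (K \ {none}).Infinite := hinf.diff (finite_singleton _)
    have hsub : K \ {none} ⊆ some '' (some ⁻¹' K) := by
      rintro (_ | n) ⟨hmem, hne⟩
      · exact absurd rfl hne
      · exact ⟨n, hmem, rfl⟩
    exact ((this.mono hsub)).of_image
  set emb := hS.natEmbedding
  set S₁ : Set ℕ := range (fun k => (emb (2 * k)).1) with hS₁def
  set S₂ : Set ℕ := range (fun k => (emb (2 * k + 1)).1) with hS₂def
  have hS₁i : S₁.Infinite := infinite_range_of_injective
    (fun a b h => by
      have := emb.injective (Subtype.ext h); omega)
  have hS₂i : S₂.Infinite := infinite_range_of_injective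
    (fun a b h => by
      have := emb.injective (Subtype.ext h); omega)
  have hdisj : Disjoint S₁ S₂ := by
    rw [Set.disjoint_left]
    rintro x ⟨a, rfl⟩ ⟨b, hb⟩
    have := emb.injective (Subtype.ext hb.symm)
    omega
  have hsub1 : S₁ ⊆ some ⁻¹' K := by rintro x ⟨a, rfl⟩; exact (emb (2 * a)).2
  have hsub2 : S₂ ⊆ some ⁻¹' K := by rintro x ⟨a, rfl⟩; exact (emb (2 * a + 1)).2
  obtain ⟨T, hTinf, hTsub, hTc⟩ :
      ∃ T : Set ℕ, T.Infinite ∧ T ⊆ some ⁻¹' K ∧ Tᶜ ∈ Filter.hyperfilter ℕ := by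
    by_cases h1 : S₁ ∈ Filter.hyperfilter ℕ
    · refine ⟨S₂, hS₂i, hsub2, ?_⟩
      rw [Ultrafilter.compl_mem_iff_notMem]
      intro h2
      exact absurd (Filter.inter_mem h1 h2)
        (by rw [Set.disjoint_iff_inter_eq_empty.1 hdisj]
            exact (Filter.hyperfilter ℕ).empty_notMem)
    · exact ⟨S₁, hS₁i, hsub1, (Ultrafilter.compl_mem_iff_notMem).2 h1⟩
  have hTclosed : IsClosed (some '' T : Set (Option ℕ)) := by
    rw [← isOpen_compl_iff]
    intro _
    have : some ⁻¹' ((some '' T)ᶜ : Set (Option ℕ)) = Tᶜ := by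
      ext k; simp [(Option.some_injective ℕ).mem_set_image]
    rw [this]; exact hTc
  have hC : IsCompact (K ∩ some '' T) := hK.inter_right hTclosed
  have hCinf : (K ∩ some '' T).Infinite := by
    refine Set.Infinite.mono ?_ (hTinf.image (Option.some_injective ℕ).injOn)
    rintro _ ⟨n, hn, rfl⟩
    exact ⟨hTsub hn, n, hn, rfl⟩
  have hcov : K ∩ some '' T ⊆ ⋃ n : ℕ, {some n} := by
    rintro _ ⟨_, n, hn, rfl⟩
    exact mem_iUnion.2 ⟨n, rfl⟩
  obtain ⟨t, ht⟩ := hC.elim_finite_subcover (fun n : ℕ => {some n})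
    (fun n => ultra_singleton_open n) hcov
  refine hCinf (Set.Finite.subset (t.finite_toSet.image (fun n => some n)) ?_)
  intro y hy
  obtain ⟨n, hnt, hn⟩ := by simpa using ht hy
  exact ⟨n, hnt, hn.symm ▸ rfl⟩

/-! Diagonalisation against a countable family of infinite subsets of `ℕ` -/

lemma exTwo (f : ℕ → Set ℕ) (hf : ∀ n, (f n).Infinite) (n c : ℕ) :
    ∃ p : ℕ × ℕ, p.1 ∈ f n ∧ p.2 ∈ f n ∧ c ≤ p.1 ∧ p.1 < p.2 := by
  obtain ⟨a, ha⟩ := ((hf n).diff (finite_Iio c)).nonempty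
  obtain ⟨b, hb⟩ := ((hf n).diff (finite_Iio (a + 1))).nonempty
  refine ⟨(a, b), ha.1, hb.1, ?_, ?_⟩
  · have := ha.2; simp [mem_Iio] at this; omega
  · have := hb.2; simp [mem_Iio] at this; omega

noncomputable def diagSt (f : ℕ → Set ℕ) (hf : ∀ n, (f n).Infinite) : ℕ → ℕ × ℕ × ℕ
  | 0 => let p := (exTwo f hf 0 0).choose; (p.2 + 1, p.1, p.2)
  | n + 1 =>
    let c := (diagSt f hf n).1
    let p := (exTwo f hf (n + 1) c).choose; (p.2 + 1, p.1, p.2)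

lemma diagSt_spec (f : ℕ → Set ℕ) (hf : ∀ n, (f n).Infinite) (n : ℕ) :
    (diagSt f hf n).2.1 ∈ f n ∧ (diagSt f hf n).2.2 ∈ f n ∧
    (diagSt f hf n).2.1 < (diagSt f hf n).2.2 ∧
    (diagSt f hf n).1 = (diagSt f hf n).2.2 + 1 ∧
    (diagSt f hf n).1 ≤ (diagSt f hf (n + 1)).2.1 := by
  have h0 := (exTwo f hf 0 0).choose_spec
  have hsucc : ∀ m, (diagSt f hf (m + 1)) =
      ((exTwo f hf (m + 1) (diagSt f hf m).1).choose.2 + 1,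
        (exTwo f hf (m + 1) (diagSt f hf m).1).choose.1,
        (exTwo f hf (m + 1) (diagSt f hf m).1).choose.2) := fun m => rfl
  cases n with
  | zero =>
    have hs := (exTwo f hf 1 (diagSt f hf 0).1).choose_spec
    exact ⟨h0.1, h0.2.1, h0.2.2.2, rfl, by rw [hsucc 0]; exact hs.2.2.1⟩
  | succ m =>
    have hs := (exTwo f hf (m + 1) (diagSt f hf m).1).choose_spec
    have hs2 := (exTwo f hf (m + 2) (diagSt f hf (m + 1)).1).choose_spec
    rw [hsucc m]
    exact ⟨hs.1, hs.2.1, hs.2.2.2, rfl, by rw [hsucc (m + 1)] at *; exact hs2.2.2.1⟩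

lemma diag_main (f : ℕ → Set ℕ) (hf : ∀ n, (f n).Infinite) :
    ∃ a b : ℕ → ℕ, (∀ n, a n ∈ f n) ∧ (∀ n, b n ∈ f n) ∧ (∀ n, b n ∉ range a) := by
  set a : ℕ → ℕ := fun n => (diagSt f hf n).2.1 with ha
  set b : ℕ → ℕ := fun n => (diagSt f hf n).2.2 with hb
  have hspec := diagSt_spec f hf
  have hA : ∀ n, (diagSt f hf n).2.1 = a n := fun _ => rfl
  have hB : ∀ n, (diagSt f hf n).2.2 = b n := fun _ => rfl
  have hab : ∀ n, a n < b n := fun n => by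
    have h := (hspec n).2.2.1; rwa [hA, hB] at h
  have hba : ∀ n, b n < a (n + 1) := fun n => by
    have h1 := (hspec n).2.2.2.1
    have h2 := (hspec n).2.2.2.2
    rw [hB n] at h1; rw [hA (n + 1)] at h2
    omega
  have hmono : StrictMono a := strictMono_nat_of_lt_succ (fun n => (hab n).trans (hba n))
  have hbne : ∀ n k, b n ≠ a k := by
    intro n k
    rcases le_or_gt k n with h | h
    · exact ne_of_gt (lt_of_le_of_lt (hmono.monotone h) (hab n))
    · exact ne_of_lt (lt_of_lt_of_le (hba n) (hmono.monotone h))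
  exact ⟨a, b, fun n => (hspec n).1, fun n => (hspec n).2.1,
    fun n => by rintro ⟨k, hk⟩; exact hbne n k hk.symm⟩

/-- The ultrafilter space has no countable Pytkeev network. -/
lemma ultra_no_countable_pytkeev :
    ¬ ∃ 𝒬 : Set (Set (Option ℕ)), 𝒬.Countable ∧ @IsPytkeevNetwork _ ultraTop 𝒬 := by
  letI := ultraTop
  rintro ⟨𝒬, hc, hPN⟩
  set A : Set (Option ℕ) := range some with hA
  have hopen_insert : ∀ F ∈ Filter.hyperfilter ℕ, IsOpen (insert none (some '' F)) := by
    intro F hF _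
    rw [ultra_preimage_insert]
    exact hF
  have hclA : none ∈ closure A := by
    rw [mem_closure_iff]
    intro O hO hnO
    obtain ⟨n, hn⟩ := Filter.nonempty_of_mem (hO hnO)
    exact ⟨some n, hn, mem_range_self n⟩
  have haccA : AccPt none (𝓟 A) := by
    rw [accPt_iff_nhds]
    intro U hU
    obtain ⟨t, hts, hto, hnt⟩ := mem_nhds_iff.1 hU
    obtain ⟨n, hn⟩ := Filter.nonempty_of_mem (hto hnt)
    exact ⟨some n, ⟨hts hn, mem_range_self n⟩, by simp⟩
  set T : Set (Set ℕ) := {s | ∃ P ∈ 𝒬, some ⁻¹' P = s ∧ s.Infinite} with hT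
  have hTc : T.Countable := by
    have : T ⊆ (fun P => some ⁻¹' P) '' 𝒬 := by
      rintro s ⟨P, hP, rfl, _⟩
      exact ⟨P, hP, rfl⟩
    exact (hc.image _).mono this
  have hTne : T.Nonempty := by
    obtain ⟨P, hP𝒬, hnP, _, hinf⟩ := hPN A none hclA univ isOpen_univ (mem_univ _)
    refine ⟨some ⁻¹' P, P, hP𝒬, rfl, ?_⟩
    have h1 := hinf haccA
    have : P ∩ A = some '' (some ⁻¹' P) := by
      rw [Set.image_preimage_eq_inter_range]
    rw [this] at h1
    exact h1.of_image
  obtain ⟨f, hfeq⟩ := hTc.exists_eq_range hTne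
  have hfinf : ∀ n, (f n).Infinite := by
    intro n
    have : f n ∈ T := by rw [hfeq]; exact mem_range_self n
    obtain ⟨P, -, -, hinf⟩ := this
    exact hinf
  obtain ⟨a, b, haf, hbf, hbS⟩ := diag_main f hfinf
  have key : ∀ F, F ∈ Filter.hyperfilter ℕ → ∃ m, f m ⊆ F := by
    intro F hFmem
    obtain ⟨P, hP𝒬, hnP, hPO, hPinf⟩ :=
      hPN A none hclA (insert none (some '' F)) (hopen_insert F hFmem) (mem_insert _ _)
    have htr : (some ⁻¹' P).Infinite := by
      have h1 := hPinf haccA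
      have h2 : P ∩ A = some '' (some ⁻¹' P) := by rw [Set.image_preimage_eq_inter_range]
      rw [h2] at h1
      exact h1.of_image
    obtain ⟨m, hm⟩ : ∃ m, f m = some ⁻¹' P := by
      have : some ⁻¹' P ∈ T := ⟨P, hP𝒬, rfl, htr⟩
      rwa [hfeq, mem_range] at this
    refine ⟨m, ?_⟩
    rw [hm]
    intro n hn
    rcases hPO hn with h | ⟨k, hk, hke⟩
    · exact absurd h (by simp)
    · rwa [← Option.some_injective ℕ hke]
  rcases em (range a ∈ Filter.hyperfilter ℕ) with hcase | hcase
  · obtain ⟨m, hsub⟩ := key _ hcase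
    exact hbS m (hsub (hbf m))
  · obtain ⟨m, hsub⟩ := key _ ((Ultrafilter.compl_mem_iff_notMem).2 hcase)
    exact (hsub (haf m)) (mem_range_self m)

/-- The ultrafilter space is an ℵ₀-space. -/
lemma ultra_aleph0 : @Aleph0Space (Option ℕ) ultraTop := by
  letI := ultraTop
  refine ⟨ultra_regular, range (fun x : Option ℕ => ({x} : Set (Option ℕ))), countable_range _, ?_⟩
  intro K U hK hU hKU
  refine ⟨(fun x : Option ℕ => ({x} : Set (Option ℕ))) '' K, ?_,
    (ultra_compact_finite hK).image _, ?_, ?_⟩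
  · rintro _ ⟨x, _, rfl⟩; exact mem_range_self x
  · intro x hx
    exact ⟨{x}, ⟨x, hx, rfl⟩, rfl⟩
  · rintro y ⟨_, ⟨x, hx, rfl⟩, hy⟩
    rw [mem_singleton_iff] at hy
    exact hy ▸ hKU hx

/-- Every metrizable separable space is a Pytkeev ℵ₀-space, every Pytkeev ℵ₀-space is
an ℵ₀-space, and the inclusion of the Pytkeev ℵ₀-spaces in the ℵ₀-spaces is proper. -/
theorem pytkeev_aleph0_inclusions :
    (∀ (X : Type) [TopologicalSpace X], TopologicalSpace.MetrizableSpace X →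
      TopologicalSpace.SeparableSpace X → PytkeevAleph0Space X) ∧
    (∀ (X : Type) [TopologicalSpace X], PytkeevAleph0Space X → Aleph0Space X) ∧
    (∃ (X : Type) (_ : TopologicalSpace X), Aleph0Space X ∧ ¬ PytkeevAleph0Space X) := by
  refine ⟨?_, ?_, ?_⟩
  · intro X _ hm hs
    haveI := hm; haveI := hs
    letI : MetricSpace X := TopologicalSpace.metrizableSpaceMetric X
    haveI := UniformSpace.secondCountable_of_separable X
    refine ⟨inferInstance, TopologicalSpace.countableBasis X,
      TopologicalSpace.countable_countableBasis X, ?_⟩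
    intro A x hx O hO hxO
    obtain ⟨B, hB, hxB, hBO⟩ :=
      (TopologicalSpace.isBasis_countableBasis X).exists_subset_of_mem_open hxO hO
    exact ⟨B, hB, hxB, hBO, fun hacc =>
      accPt_infinite_inter hacc
        (((TopologicalSpace.isBasis_countableBasis X).isOpen hB).mem_nhds hxB)⟩
  · rintro X _ ⟨hreg, 𝒬, hc, hP⟩
    exact ⟨hreg, 𝒬, hc, pytkeev_isKNetwork hc hP⟩
  · refine ⟨Option ℕ, ultraTop, ultra_aleph0, ?_⟩
    rintro ⟨-, h𝒬⟩
    exact ultra_no_countable_pytkeev h𝒬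
end

section
/- The class of Pytkeev ℵ₀-spaces is closed under taking subspaces and countable Tychonoff products. -/
open Set

open Filter Topology

section Helpers

variable {Y : Type*} [TopologicalSpace Y]

lemma accPt_union' {x : Y} {A B : Set Y} :
    AccPt x (𝓟 (A ∪ B)) ↔ AccPt x (𝓟 A) ∨ AccPt x (𝓟 B) := by
  rw [← sup_principal, accPt_sup]

lemma mem_closure_of_accPt {x : Y} {A : Set Y} (h : AccPt x (𝓟 A)) : x ∈ closure A := by
  rw [mem_closure_iff_nhds]
  intro t ht
  obtain ⟨y, hy, -⟩ := accPt_iff_nhds.mp h t ht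
  exact ⟨y, hy⟩

lemma infinite_of_accPt [T1Space Y] {x : Y} {C : Set Y} (h : AccPt x (𝓟 C)) :
    C.Infinite := by
  by_contra hfin
  rw [Set.not_infinite] at hfin
  have hcl : IsClosed (C \ {x}) := (hfin.diff (t := {x})).isClosed
  have hU : (C \ {x})ᶜ ∈ 𝓝 x := hcl.isOpen_compl.mem_nhds (fun hx => hx.2 rfl)
  obtain ⟨y, ⟨hyU, hyC⟩, hyx⟩ := accPt_iff_nhds.mp h _ hU
  exact hyU ⟨hyC, hyx⟩

lemma t1Space_of_pytkeev {𝒬 : Set (Set Y)} (h : IsPytkeevNetwork 𝒬) : T1Space Y := by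
  refine ⟨fun y => ?_⟩
  rw [← closure_subset_iff_isClosed]
  intro x hx
  by_contra hxy
  have hacc : AccPt x (𝓟 ({y} : Set Y)) := by
    rw [accPt_iff_nhds]
    intro U hU
    obtain ⟨z, hz⟩ := mem_closure_iff_nhds.mp hx U hU
    exact ⟨z, hz, fun h' => hxy (h' ▸ hz.2)⟩
  obtain ⟨P, -, -, -, hinf⟩ := h {y} x hx univ isOpen_univ (mem_univ x)
  exact ((finite_singleton y).subset inter_subset_right).not_infinite (hinf hacc)

lemma accPt_image' {Z : Type*} [TopologicalSpace Z] {φ : Y → Z} (hφ : Continuous φ)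
    {x : Y} {A : Set Y} (h : AccPt x (𝓟 A)) (hne : ∀ a ∈ A, a ≠ x → φ a ≠ φ x) :
    AccPt (φ x) (𝓟 (φ '' A)) := by
  rw [accPt_iff_nhds] at h ⊢
  intro V hV
  obtain ⟨y, ⟨hy1, hy2⟩, hy3⟩ := h (φ ⁻¹' V) (hφ.continuousAt.preimage_mem_nhds hV)
  exact ⟨φ y, ⟨hy1, mem_image_of_mem φ hy2⟩, hne y hy2 hy3⟩

lemma exists_net_at {𝒬 : Set (Set Y)} (h : IsPytkeevNetwork 𝒬) {x : Y} {O : Set Y}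
    (hO : IsOpen O) (hx : x ∈ O) : ∃ P ∈ 𝒬, x ∈ P ∧ P ⊆ O := by
  obtain ⟨P, h1, h2, h3, -⟩ := h {x} x (subset_closure rfl) O hO hx
  exact ⟨P, h1, h2, h3⟩

lemma accPt_biUnion_finset {ι : Type*} {x : Y} {s : Finset ι} {C : ι → Set Y}
    (h : AccPt x (𝓟 (⋃ i ∈ s, C i))) : ∃ i ∈ s, AccPt x (𝓟 (C i)) := by
  classical
  induction s using Finset.induction with
  | empty =>
    simp only [Finset.notMem_empty, iUnion_of_empty, iUnion_empty] at h
    obtain ⟨y, hy, -⟩ := accPt_iff_nhds.mp h univ univ_mem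
    exact absurd hy.2 (notMem_empty y)
  | insert _ _ hni ih =>
    rw [Finset.set_biUnion_insert] at h
    rcases accPt_union'.mp h with h1 | h2
    · exact ⟨_, Finset.mem_insert_self _ _, h1⟩
    · obtain ⟨i, hi, hacc⟩ := ih h2
      exact ⟨i, Finset.mem_insert_of_mem hi, hacc⟩

end Helpers

section Product

variable {X : ℕ → Type} [∀ n, TopologicalSpace (X n)]

lemma pytkeev_box_lemma [∀ n, T1Space (X n)] (𝒬 : ∀ n, Set (Set (X n)))
    (hQ : ∀ n, IsPytkeevNetwork (𝒬 n)) (hQc : ∀ n, (𝒬 n).Countable) :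
    ∀ (I : Finset ℕ) (A : Set (∀ n, X n)) (f : ∀ n, X n) (U : ∀ n, Set (X n)),
      (∀ i ∈ I, IsOpen (U i) ∧ f i ∈ U i) → AccPt f (𝓟 A) →
      ∃ P : ∀ n, Set (X n), (∀ i ∈ I, P i ∈ 𝒬 i ∧ f i ∈ P i ∧ P i ⊆ U i) ∧
        (A ∩ {g | ∀ i ∈ I, g i ∈ P i}).Infinite := by
  classical
  intro I
  induction I using Finset.strongInduction with
  | _ I IH =>
  intro A f U hU hA
  by_contra hcon0
  have hcon : ∀ P : ∀ n, Set (X n), (∀ i ∈ I, P i ∈ 𝒬 i ∧ f i ∈ P i ∧ P i ⊆ U i) →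
      ¬ (A ∩ {g | ∀ i ∈ I, g i ∈ P i}).Infinite :=
    fun P hc hi => hcon0 ⟨P, hc, hi⟩
  -- admissible sets at each coordinate
  have hAdmne : ∀ k ∈ I, ∃ P, P ∈ 𝒬 k ∧ f k ∈ P ∧ P ⊆ U k := by
    intro k hk
    obtain ⟨P, h1, h2, h3⟩ := exists_net_at (hQ k) (hU k hk).1 (hU k hk).2
    exact ⟨P, h1, h2, h3⟩
  -- the key step: no admissible slab can host an accumulating subset of A
  have step : ∀ k ∈ I, ∀ P : Set (X k), (P ∈ 𝒬 k ∧ f k ∈ P ∧ P ⊆ U k) →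
      ∀ B ⊆ A, ¬ AccPt f (𝓟 (B ∩ {g | g k ∈ P})) := by
    intro k hk P hP B hBA hacc
    obtain ⟨P', hP', hinf⟩ := IH (I.erase k) (Finset.erase_ssubset hk) _ f U
      (fun i hi => hU i (Finset.mem_of_mem_erase hi)) hacc
    refine hcon (Function.update P' k P) ?_ ?_
    · intro i hi
      rcases eq_or_ne i k with rfl | hik
      · rw [Function.update_self]; exact hP
      · rw [Function.update_of_ne hik]
        exact hP' i (Finset.mem_erase.mpr ⟨hik, hi⟩)
    · refine hinf.mono ?_
      rintro a ⟨⟨haB, hak⟩, ha'⟩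
      refine ⟨hBA haB, fun i hi => ?_⟩
      rcases eq_or_ne i k with rfl | hik
      · rw [Function.update_self]; exact hak
      · rw [Function.update_of_ne hik]
        exact ha' i (Finset.mem_erase.mpr ⟨hik, hi⟩)
  rcases I.eq_empty_or_nonempty with rfl | ⟨i₀, hi₀⟩
  · refine hcon (fun _ => univ) (by simp) ?_
    simpa using infinite_of_accPt hA
  -- split A along coordinate i₀
  set A₂ : Set (∀ n, X n) := {a ∈ A | a i₀ ≠ f i₀} with hA₂def
  have hA₂acc : AccPt f (𝓟 A₂) := by
    obtain ⟨P, hP⟩ := hAdmne i₀ hi₀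
    have hsplit : A = {a ∈ A | a i₀ = f i₀} ∪ A₂ := by
      ext a
      by_cases h : a i₀ = f i₀ <;> simp [hA₂def, h, mem_setOf_eq]
    rcases accPt_union'.mp (by rwa [hsplit] at hA) with h1 | h2
    · exfalso
      refine step i₀ hi₀ P hP {a ∈ A | a i₀ = f i₀} (sep_subset _ _) ?_
      refine h1.mono (principal_mono.mpr ?_)
      intro a ha
      refine ⟨ha, ?_⟩
      show a i₀ ∈ P
      rw [ha.2]
      exact hP.2.1
    · exact h2
  have hspread : ∀ a ∈ A₂, a i₀ ≠ f i₀ := fun a ha => ha.2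
  by_cases hk0 : ∃ k' ∈ I, k' ≠ i₀
  case neg =>
    push_neg at hk0
    have himg := accPt_image' (continuous_apply i₀) hA₂acc (fun a ha _ => hspread a ha)
    obtain ⟨P, hPQ, hPx, hPU, hPinf⟩ := hQ i₀ _ _ (mem_closure_of_accPt himg)
      (U i₀) (hU i₀ hi₀).1 (hU i₀ hi₀).2
    have hinf := hPinf himg
    have hinf2 : (A₂ ∩ {g | g i₀ ∈ P}).Infinite := by
      have hsub : P ∩ ((fun a => a i₀) '' A₂) ⊆ (fun a => a i₀) '' (A₂ ∩ {g | g i₀ ∈ P}) := by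
        rintro b ⟨hbP, a, haA, rfl⟩
        exact ⟨a, ⟨haA, hbP⟩, rfl⟩
      exact ((hinf.mono hsub)).of_image
    refine hcon (Function.update (fun n => (univ : Set (X n))) i₀ P) ?_ ?_
    · intro i hi
      obtain rfl := hk0 i hi
      rw [Function.update_self]
      exact ⟨hPQ, hPx, hPU⟩
    · refine hinf2.mono ?_
      rintro a ⟨haA₂, haP⟩
      refine ⟨haA₂.1, fun i hi => ?_⟩
      obtain rfl := hk0 i hi
      rw [Function.update_self]
      exact haP
  case pos =>
  obtain ⟨k'', hk''I, hk''ne⟩ := hk0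
  -- enumerate all admissible pairs (coordinate, admissible set)
  have hTc : {p : Σ k, Set (X k) | p.1 ∈ I ∧ (p.2 ∈ 𝒬 p.1 ∧ f p.1 ∈ p.2 ∧ p.2 ⊆ U p.1)}.Countable := by
    have hsub : {p : Σ k, Set (X k) | p.1 ∈ I ∧ (p.2 ∈ 𝒬 p.1 ∧ f p.1 ∈ p.2 ∧ p.2 ⊆ U p.1)} ⊆
        ⋃ k ∈ (I : Set ℕ), (fun P => (⟨k, P⟩ : Σ k, Set (X k))) '' (𝒬 k) := by
      rintro ⟨k, P⟩ ⟨h1, h2⟩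
      exact mem_biUnion h1 ⟨P, h2.1, rfl⟩
    exact Set.Countable.mono hsub
      (Set.Countable.biUnion I.countable_toSet (fun k _ => ((hQc k).image _)))
  have hTne : {p : Σ k, Set (X k) | p.1 ∈ I ∧ (p.2 ∈ 𝒬 p.1 ∧ f p.1 ∈ p.2 ∧ p.2 ⊆ U p.1)}.Nonempty := by
    obtain ⟨P, hP⟩ := hAdmne i₀ hi₀
    exact ⟨⟨i₀, P⟩, hi₀, hP⟩
  obtain ⟨t, ht⟩ := hTc.exists_eq_range hTne
  have htI : ∀ m, (t m).1 ∈ I ∧ ((t m).2 ∈ 𝒬 (t m).1 ∧ f (t m).1 ∈ (t m).2 ∧ (t m).2 ⊆ U (t m).1) := by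
    intro m
    have hm : t m ∈ {p : Σ k, Set (X k) | p.1 ∈ I ∧ (p.2 ∈ 𝒬 p.1 ∧ f p.1 ∈ p.2 ∧ p.2 ⊆ U p.1)} := by
      rw [ht]; exact mem_range_self m
    exact hm
  have htmem : ∀ k ∈ I, ∀ P : Set (X k), (P ∈ 𝒬 k ∧ f k ∈ P ∧ P ⊆ U k) → ∃ m, t m = ⟨k, P⟩ := by
    intro k hk P hP
    have hmem : (⟨k, P⟩ : Σ k, Set (X k)) ∈
        {p : Σ k, Set (X k) | p.1 ∈ I ∧ (p.2 ∈ 𝒬 p.1 ∧ f p.1 ∈ p.2 ∧ p.2 ⊆ U p.1)} := ⟨hk, hP⟩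
    rw [ht] at hmem
    obtain ⟨m, hm⟩ := hmem
    exact ⟨m, hm⟩
  set slab : ℕ → Set (∀ n, X n) := fun m => {g | g (t m).1 ∈ (t m).2} with hslabdef
  have hremove : ∀ (B : Set (∀ n, X n)), B ⊆ A₂ → AccPt f (𝓟 B) → ∀ m,
      AccPt f (𝓟 (B \ slab m)) := by
    intro B hB hacc m
    have hsplit : B = (B ∩ slab m) ∪ (B \ slab m) := (inter_union_diff B (slab m)).symm
    rcases accPt_union'.mp (by rwa [hsplit] at hacc) with h1 | h2
    · exact absurd h1 (step (t m).1 (htI m).1 (t m).2 (htI m).2 B (fun a ha => (hB ha).1))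
    · exact h2
  set S : ℕ → Set (∀ n, X n) := fun n => {a ∈ A₂ | ∀ m ≤ n, a ∉ slab m} with hSdef
  have hSacc : ∀ n, AccPt f (𝓟 (S n)) := by
    intro n
    induction n with
    | zero =>
      have hEq : S 0 = A₂ \ slab 0 := by
        ext a
        simp only [hSdef, mem_setOf_eq, Nat.le_zero, mem_diff, forall_eq]
      rw [hEq]
      exact hremove A₂ Subset.rfl hA₂acc 0
    | succ n ihn =>
      have hEq : S (n + 1) = S n \ slab (n + 1) := by
        ext a
        simp only [hSdef, mem_setOf_eq, mem_diff]
        constructor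
        · rintro ⟨ha, h2⟩
          exact ⟨⟨ha, fun m hm => h2 m (le_trans hm (Nat.le_succ n))⟩, h2 (n + 1) le_rfl⟩
        · rintro ⟨⟨ha, h2⟩, h3⟩
          refine ⟨ha, fun m hm => ?_⟩
          rcases eq_or_lt_of_le hm with rfl | hlt
          · exact h3
          · exact h2 m (Nat.lt_succ_iff.mp hlt)
      rw [hEq]
      exact hremove (S n) (fun a ha => ha.1) ihn (n + 1)
  have hSinf : ¬ AccPt f (𝓟 ({a ∈ A₂ | ∀ m, a ∉ slab m})) := by
    intro hacc
    have himg := accPt_image' (continuous_apply i₀) hacc (fun a ha _ => hspread a ha.1)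
    obtain ⟨P, hPQ, hPx, hPU, hPinf⟩ := hQ i₀ _ _ (mem_closure_of_accPt himg)
      (U i₀) (hU i₀ hi₀).1 (hU i₀ hi₀).2
    obtain ⟨b, hbP, a, haS, rfl⟩ := (hPinf himg).nonempty
    obtain ⟨m, hm⟩ := htmem i₀ hi₀ P ⟨hPQ, hPx, hPU⟩
    refine haS.2 m ?_
    show a (t m).1 ∈ (t m).2
    rw [hm]
    exact hbP
  have hTacc : AccPt f (𝓟 ({a ∈ A₂ | ∃ m, a ∈ slab m})) := by
    have hsplit : A₂ = {a ∈ A₂ | ∀ m, a ∉ slab m} ∪ {a ∈ A₂ | ∃ m, a ∈ slab m} := by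
      ext a
      constructor
      · intro ha
        by_cases h : ∃ m, a ∈ slab m
        · exact Or.inr ⟨ha, h⟩
        · exact Or.inl ⟨ha, fun m hm => h ⟨m, hm⟩⟩
      · rintro (h | h) <;> exact h.1
    rcases accPt_union'.mp (by rwa [hsplit] at hA₂acc) with h1 | h2
    · exact absurd h1 hSinf
    · exact h2
  set r : (∀ n, X n) → ℕ := fun a => if h : ∃ m, a ∈ slab m then Nat.find h else 0 with hrdef
  have hr1 : ∀ a, (∃ m, a ∈ slab m) → a ∈ slab (r a) := by
    intro a ha
    simp only [hrdef]
    rw [dif_pos ha]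
    exact Nat.find_spec ha
  have hr2 : ∀ a m, a ∈ slab m → r a ≤ m := by
    intro a m hm
    simp only [hrdef]
    rw [dif_pos ⟨m, hm⟩]
    exact Nat.find_min' _ hm
  have hTcover : {a ∈ A₂ | ∃ m, a ∈ slab m} =
      ⋃ k ∈ I, {a ∈ {a ∈ A₂ | ∃ m, a ∈ slab m} | (t (r a)).1 = k} := by
    ext a
    constructor
    · intro ha
      exact mem_biUnion (htI (r a)).1 ⟨ha, rfl⟩
    · intro h
      simp only [mem_iUnion, exists_prop] at h
      obtain ⟨k, -, ha, -⟩ := h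
      exact ha
  obtain ⟨kstar, hkstarI, hCacc⟩ := accPt_biUnion_finset (by rwa [hTcover] at hTacc)
  obtain ⟨P', hP', hinf'⟩ := IH (I.erase kstar) (Finset.erase_ssubset hkstarI)
    {a ∈ {a ∈ A₂ | ∃ m, a ∈ slab m} | (t (r a)).1 = kstar} f U
    (fun i hi => hU i (Finset.mem_of_mem_erase hi)) hCacc
  obtain ⟨k', hk'I, hk'ne⟩ : ∃ k' ∈ I, k' ≠ kstar := by
    rcases eq_or_ne kstar i₀ with rfl | hne
    · exact ⟨k'', hk''I, hk''ne⟩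
    · exact ⟨i₀, hi₀, fun h => hne h.symm⟩
  obtain ⟨j₀, hj₀⟩ := htmem k' hk'I (P' k') (hP' k' (Finset.mem_erase.mpr ⟨hk'ne, hk'I⟩))
  have hDr : ∀ a ∈ {a ∈ {a ∈ A₂ | ∃ m, a ∈ slab m} | (t (r a)).1 = kstar} ∩
      {g | ∀ i ∈ I.erase kstar, g i ∈ P' i}, r a ≤ j₀ := by
    rintro a ⟨-, ha2⟩
    refine hr2 a j₀ ?_
    show a (t j₀).1 ∈ (t j₀).2
    rw [hj₀]
    exact ha2 k' (Finset.mem_erase.mpr ⟨hk'ne, hk'I⟩)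
  obtain ⟨rstar, hrstar⟩ : ∃ m, {a ∈ ({a ∈ {a ∈ A₂ | ∃ m, a ∈ slab m} | (t (r a)).1 = kstar} ∩
      {g | ∀ i ∈ I.erase kstar, g i ∈ P' i}) | r a = m}.Infinite := by
    by_contra hfin
    push_neg at hfin
    have hsub : {a ∈ A₂ | ∃ m, a ∈ slab m} ∩ {g | ∀ i ∈ I.erase kstar, g i ∈ P' i} ⊆ ∅ → True := fun _ => trivial
    have hcov : ({a ∈ {a ∈ A₂ | ∃ m, a ∈ slab m} | (t (r a)).1 = kstar} ∩
        {g | ∀ i ∈ I.erase kstar, g i ∈ P' i}) ⊆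
        ⋃ m ∈ Finset.range (j₀ + 1), {a ∈ ({a ∈ {a ∈ A₂ | ∃ m, a ∈ slab m} | (t (r a)).1 = kstar} ∩
          {g | ∀ i ∈ I.erase kstar, g i ∈ P' i}) | r a = m} := by
      intro a ha
      exact mem_biUnion (Finset.mem_range.mpr (Nat.lt_succ_of_le (hDr a ha))) ⟨ha, rfl⟩
    exact hinf' ((Set.Finite.biUnion (Finset.range (j₀ + 1)).finite_toSet
      (fun m _ => hfin m)).subset hcov)
  obtain ⟨a₀, ha₀⟩ := hrstar.nonempty
  have hkeq : (t rstar).1 = kstar := by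
    rw [← ha₀.2]
    exact ha₀.1.1.2
  subst hkeq
  refine hcon (Function.update P' (t rstar).1 (t rstar).2) ?_ ?_
  · intro i hi
    rcases eq_or_ne i (t rstar).1 with rfl | hik
    · rw [Function.update_self]
      exact (htI rstar).2
    · rw [Function.update_of_ne hik]
      exact hP' i (Finset.mem_erase.mpr ⟨hik, hi⟩)
  · refine hrstar.mono ?_
    rintro a ⟨⟨⟨⟨⟨haA, -⟩, hex⟩, -⟩, htr⟩, har⟩
    refine ⟨haA, fun i hi => ?_⟩
    rcases eq_or_ne i (t rstar).1 with rfl | hik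
    · rw [Function.update_self]
      have hs := hr1 a hex
      rw [har] at hs
      exact hs
    · rw [Function.update_of_ne hik]
      exact htr i (Finset.mem_erase.mpr ⟨hik, hi⟩)

end Product

/-- The class of Pytkeev ℵ₀-spaces is closed under subspaces and countable Tychonoff
products. -/
theorem pytkeev_aleph0_subspaces_and_countable_products :
    (∀ (X : Type*) [TopologicalSpace X], PytkeevAleph0Space X →
      ∀ s : Set X, PytkeevAleph0Space s) ∧
    (∀ (X : ℕ → Type) [∀ n, TopologicalSpace (X n)],
      (∀ n, PytkeevAleph0Space (X n)) → PytkeevAleph0Space (∀ n, X n)) := by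
  constructor
  · rintro X _ ⟨hreg, 𝒬, hc, hnet⟩ s
    haveI := hreg
    refine ⟨inferInstance, (fun P => (Subtype.val : s → X) ⁻¹' P) '' 𝒬, hc.image _, ?_⟩
    intro A x hx O hO hxO
    obtain ⟨V, hV, hVO⟩ := isOpen_induced_iff.mp hO
    have hxV : (x : X) ∈ V := by rw [← hVO] at hxO; exact hxO
    have hxcl : (x : X) ∈ closure (Subtype.val '' A) := closure_subtype.mp hx
    obtain ⟨P, hPQ, hPx, hPV, hPinf⟩ := hnet (Subtype.val '' A) x hxcl V hV hxV
    refine ⟨Subtype.val ⁻¹' P, ⟨P, hPQ, rfl⟩, hPx, ?_, ?_⟩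
    · rw [← hVO]; exact fun a ha => hPV ha
    · intro hacc
      have hacc' : AccPt (x : X) (𝓟 (Subtype.val '' A)) :=
        accPt_image' continuous_subtype_val hacc
          (fun a _ hax h => hax (Subtype.val_injective h))
      have hsub : P ∩ Subtype.val '' A ⊆ Subtype.val '' (Subtype.val ⁻¹' P ∩ A) := by
        rintro b ⟨hbP, a, haA, rfl⟩
        exact ⟨a, ⟨hbP, haA⟩, rfl⟩
      exact (((hPinf hacc').mono hsub)).of_image
  · intro X _ h
    have hreg : ∀ n, RegularSpace (X n) := fun n => (h n).1
    have h2 : ∀ n, ∃ 𝒬 : Set (Set (X n)), 𝒬.Countable ∧ IsPytkeevNetwork 𝒬 := fun n => (h n).2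
    choose 𝒬 hQc hQ using h2
    haveI := hreg
    haveI : ∀ n, T1Space (X n) := fun n => t1Space_of_pytkeev (hQ n)
    refine ⟨inferInstance, {S | ∃ (I : Finset ℕ) (P : ∀ n, Set (X n)),
      (∀ i ∈ I, P i ∈ 𝒬 i) ∧ S = {g | ∀ i ∈ I, g i ∈ P i}}, ?_, ?_⟩
    · have hsub : {S | ∃ (I : Finset ℕ) (P : ∀ n, Set (X n)),
          (∀ i ∈ I, P i ∈ 𝒬 i) ∧ S = {g | ∀ i ∈ I, g i ∈ P i}} ⊆
          ⋃ I : Finset ℕ, (fun h : ∀ i : {i // i ∈ I}, Set (X i.1) =>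
            {g : ∀ n, X n | ∀ i : {i // i ∈ I}, g i.1 ∈ h i}) ''
            {h | ∀ i : {i // i ∈ I}, h i ∈ 𝒬 i.1} := by
        rintro S ⟨I, P, hP, rfl⟩
        refine mem_iUnion.mpr ⟨I, ⟨fun i => P i.1, fun i => hP i.1 i.2, ?_⟩⟩
        ext g
        simp only [mem_setOf_eq, Subtype.forall]
      refine Set.Countable.mono hsub (countable_iUnion (fun I => ?_))
      exact (Set.countable_pi (fun i : {i // i ∈ I} => hQc i.1)).image _
    · intro A f hf O hO hfO
      obtain ⟨I, u, hu, huO⟩ := isOpen_pi_iff.mp hO f hfO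
      by_cases hacc : AccPt f (𝓟 A)
      · obtain ⟨P, hP, hinf⟩ := pytkeev_box_lemma 𝒬 hQ hQc I A f u hu hacc
        refine ⟨{g | ∀ i ∈ I, g i ∈ P i}, ⟨I, P, fun i hi => (hP i hi).1, rfl⟩,
          fun i hi => (hP i hi).2.1, ?_, fun _ => by rwa [inter_comm] at hinf⟩
        intro g hg
        exact huO (fun i hi => (hP i hi).2.2 (hg i hi))
      · have hch : ∀ i : ℕ, ∃ P : Set (X i), i ∈ I → (P ∈ 𝒬 i ∧ f i ∈ P ∧ P ⊆ u i) := by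
          intro i
          by_cases hi : i ∈ I
          · obtain ⟨P, h1, h2, h3⟩ := exists_net_at (hQ i) (hu i hi).1 (hu i hi).2
            exact ⟨P, fun _ => ⟨h1, h2, h3⟩⟩
          · exact ⟨univ, fun hmem => absurd hmem hi⟩
        choose P hP using hch
        refine ⟨{g | ∀ i ∈ I, g i ∈ P i}, ⟨I, P, fun i hi => (hP i hi).1, rfl⟩,
          fun i hi => (hP i hi).2.1, ?_, fun hc => absurd hc hacc⟩
        intro g hg
        exact huO (fun i hi => (hP i hi).2.2 (hg i hi))
end

section
/- For every ℵ₀-space X and every Pytkeev ℵ₀-space Y, the function space C_k(X, Y) of continuous maps with the compact-open topology is a Pytkeev ℵ₀-space. -/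
open Set

open Filter Topology TopologicalSpace

namespace CkP0

variable {X Y : Type*} [TopologicalSpace X] [TopologicalSpace Y]

set_option linter.unusedSectionVars false

lemma sandwich [RegularSpace X] {K U : Set X}
    (hK : IsCompact K) (hU : IsOpen U) (hKU : K ⊆ U) :
    ∃ V, IsOpen V ∧ K ⊆ V ∧ closure V ⊆ U := by
  have h : ∀ x ∈ K, ∃ t ∈ 𝓝 x, IsClosed t ∧ t ⊆ U := fun x hx =>
    exists_mem_nhds_isClosed_subset (hU.mem_nhds (hKU hx))
  choose! t ht hcl htU using h
  obtain ⟨F, hFK, hFcov⟩ := hK.elim_nhds_subcover (fun x => interior (t x))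
    (fun x hx => interior_mem_nhds.2 (ht x hx))
  refine ⟨⋃ x ∈ F, interior (t x), isOpen_biUnion fun _ _ => isOpen_interior, hFcov, ?_⟩
  have : closure (⋃ x ∈ F, interior (t x)) ⊆ ⋃ x ∈ F, closure (interior (t x)) := by
    refine closure_minimal (iUnion₂_mono fun x _ => subset_closure) ?_
    exact isClosed_biUnion_finset fun x _ => isClosed_closure
  refine this.trans (iUnion₂_subset fun x hx => ?_)
  exact (closure_minimal interior_subset (hcl x (hFK x hx))).trans (htU x (hFK x hx))

lemma exists_goodN [RegularSpace X] {𝒩 : Set (Set X)}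
    (hcnt : 𝒩.Countable) (hk : IsKNetwork 𝒩) :
    ∃ N : ℕ → Set X, (∀ i, IsClosed (N i)) ∧ (∃ i, N i = univ) ∧
      (∀ i j, ∃ k, N k = N i ∩ N j) ∧
      (∀ K U : Set X, IsCompact K → IsOpen U → K ⊆ U → ∃ i, K ⊆ N i ∧ N i ⊆ U) := by
  classical
  obtain ⟨n0, hn0⟩ : ∃ n0 : ℕ → Set X, 𝒩 ∪ {∅} = range n0 :=
    (hcnt.union (countable_singleton _)).exists_eq_range (by simp)
  set NS : Finset (Finset ℕ) → Set X := fun S => ⋂ F ∈ S, closure (⋃ i ∈ F, n0 i) with hNS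
  haveI : Infinite (Finset (Finset ℕ)) := inferInstance
  haveI := Denumerable.ofEncodableOfInfinite (Finset (Finset ℕ))
  set eqv : Finset (Finset ℕ) ≃ ℕ := Denumerable.eqv (Finset (Finset ℕ)) with heqv
  refine ⟨fun k => NS (eqv.symm k), ?_, ?_, ?_, ?_⟩
  · intro k
    exact isClosed_biInter fun F _ => isClosed_closure
  · refine ⟨eqv ∅, ?_⟩
    simp [hNS]
  · intro i j
    refine ⟨eqv (eqv.symm i ∪ eqv.symm j), ?_⟩
    show NS (eqv.symm (eqv _)) = NS (eqv.symm i) ∩ NS (eqv.symm j)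
    rw [Equiv.symm_apply_apply]
    ext x
    simp only [hNS, mem_iInter, mem_inter_iff, Finset.mem_union]
    constructor
    · intro h; exact ⟨fun F hF => h F (Or.inl hF), fun F hF => h F (Or.inr hF)⟩
    · rintro ⟨h1, h2⟩ F (hF | hF); exacts [h1 F hF, h2 F hF]
  · intro K U hK hU hKU
    obtain ⟨V, hVopen, hKV, hVU⟩ := sandwich hK hU hKU
    obtain ⟨ℱ, hℱ𝒩, hfin, hcov, hsub⟩ := hk K V hK hVopen hKV
    obtain ⟨t, ht⟩ : ∃ t : Finset (Set X), ↑t = ℱ := ⟨hfin.toFinset, hfin.coe_toFinset⟩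
    have hidx : ∀ s ∈ ℱ, ∃ i, n0 i = s := by
      intro s hs
      have : s ∈ range n0 := hn0 ▸ Or.inl (hℱ𝒩 hs)
      exact this
    set g : Set X → ℕ := fun s => if h : ∃ i, n0 i = s then h.choose else 0 with hg
    have hgspec : ∀ s ∈ ℱ, n0 (g s) = s := by
      intro s hs
      have h := hidx s hs
      simp only [hg, dif_pos h]
      exact h.choose_spec
    set F : Finset ℕ := t.image g with hF
    have hUeq : ⋃ i ∈ F, n0 i = ⋃₀ ℱ := by
      apply subset_antisymm
      · refine iUnion₂_subset fun i hi => ?_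
        simp only [hF, Finset.mem_image] at hi
        obtain ⟨s, hs, rfl⟩ := hi
        rw [hgspec s (ht ▸ hs)]
        exact subset_sUnion_of_mem (ht ▸ hs)
      · rintro x ⟨s, hs, hxs⟩
        have hst : s ∈ t := by rw [← ht] at hs; exact_mod_cast hs
        exact mem_biUnion (Finset.mem_image_of_mem g hst) (by rw [hgspec s hs]; exact hxs)
    refine ⟨eqv {F}, ?_, ?_⟩
    · show K ⊆ NS (eqv.symm (eqv {F}))
      rw [Equiv.symm_apply_apply]
      simp only [hNS, Finset.mem_singleton, iInter_iInter_eq_left]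
      exact (hcov.trans (hUeq ▸ subset_closure))
    · show NS (eqv.symm (eqv {F})) ⊆ U
      rw [Equiv.symm_apply_apply]
      simp only [hNS, Finset.mem_singleton, iInter_iInter_eq_left]
      rw [hUeq]
      exact (closure_mono hsub).trans hVU

lemma t1_of_pytkeev {𝒬 : Set (Set Y)} (h : IsPytkeevNetwork 𝒬) : T1Space Y := by
  rw [t1Space_iff_exists_open]
  intro x y hxy
  by_contra hco
  push_neg at hco
  have hclo : x ∈ closure {y} := by
    rw [mem_closure_iff]
    intro o ho hxo
    exact ⟨y, hco o ho hxo, rfl⟩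
  have hacc : AccPt x (𝓟 ({y} : Set Y)) := by
    rw [accPt_iff_nhds]
    intro U hU
    obtain ⟨o, hoU, ho, hxo⟩ := mem_nhds_iff.1 hU
    exact ⟨y, ⟨hoU (hco o ho hxo), rfl⟩, fun hc => hxy hc.symm⟩
  obtain ⟨P, -, -, -, hinf⟩ := h {y} x hclo univ isOpen_univ trivial
  exact ((finite_singleton y).subset inter_subset_right).not_infinite (hinf hacc)

lemma accPt_nhds_infinite {Z : Type*} [TopologicalSpace Z]
    (hsep : ∀ f g : Z, f ≠ g → ∃ O : Set Z, IsOpen O ∧ f ∈ O ∧ g ∉ O)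
    {A : Set Z} {f : Z} (h : AccPt f (𝓟 A)) {G : Set Z} (hG : G ∈ 𝓝 f) :
    (G ∩ A).Infinite := by
  classical
  by_contra hfin
  rw [Set.not_infinite] at hfin
  have hfin' : ((G ∩ A) \ {f}).Finite := hfin.diff
  have hsep' : ∀ g ∈ (G ∩ A) \ {f}, ∃ O : Set Z, IsOpen O ∧ f ∈ O ∧ g ∉ O := by
    intro g hg
    exact hsep f g (fun hc => hg.2 (by simp [hc.symm]))
  choose! O hOopen hfO hgO using hsep'
  have hnhds : (G ∩ ⋂ g ∈ (G ∩ A) \ {f}, O g) ∈ 𝓝 f := by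
    refine Filter.inter_mem hG ?_
    exact (hfin'.isOpen_biInter (fun g hg => hOopen g hg)).mem_nhds (by
      simp only [mem_iInter₂]; exact fun g hg => hfO g hg)
  obtain ⟨y, hy, hyne⟩ := accPt_iff_nhds.1 h _ hnhds
  obtain ⟨⟨hyG, hyI⟩, hyA⟩ := hy
  rw [Set.mem_iInter₂] at hyI
  have hymem : y ∈ (G ∩ A) \ {f} := ⟨⟨hyG, hyA⟩, by simp [hyne]⟩
  exact hgO y hymem (hyI y hymem)

lemma ck_sep [T1Space Y] : ∀ f g : C(X, Y), f ≠ g →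
    ∃ O : Set C(X, Y), IsOpen O ∧ f ∈ O ∧ g ∉ O := by
  intro f g hfg
  have hx : ∃ x, f x ≠ g x := by
    by_contra h
    push_neg at h
    exact hfg (ContinuousMap.ext h)
  obtain ⟨x, hx⟩ := hx
  refine ⟨{h : C(X, Y) | MapsTo h {x} ({g x}ᶜ)},
    ContinuousMap.isOpen_setOf_mapsTo isCompact_singleton isClosed_singleton.isOpen_compl,
    ?_, ?_⟩
  · intro y hy
    rcases hy with rfl
    simpa using hx
  · intro hcon
    exact (hcon (mem_singleton x)) rfl

/-- Key pointwise lemma: a countable Pytkeev network, closed under finite unions,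
absorbs a "convergent" decreasing system of sets. -/
lemma lemmaA {𝒬 Q' : Set (Set Y)} (hP : IsPytkeevNetwork 𝒬) (hsub : 𝒬 ⊆ Q')
    (hcnt : Q'.Countable) (hunion : ∀ p ∈ Q', ∀ q ∈ Q', p ∪ q ∈ Q')
    {y : Y} {U : Set Y} (hU : IsOpen U) (hyU : y ∈ U)
    (F : ℕ → Set Y) (hF : ∀ W : Set Y, IsOpen W → y ∈ W → ∃ n, F n ⊆ W) :
    ∃ Q ∈ Q', y ∈ Q ∧ Q ⊆ U ∧ ∃ n, F n ⊆ Q := by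
  classical
  set S : Set (Set Y) := {Q | Q ∈ Q' ∧ y ∈ Q ∧ Q ⊆ U} with hS
  have hSsub : S ⊆ Q' := fun Q hQ => hQ.1
  have hSne : S.Nonempty := by
    obtain ⟨P, hPQ, hyP, hPU, -⟩ := hP {y} y (subset_closure rfl) U hU hyU
    exact ⟨P, hsub hPQ, hyP, hPU⟩
  obtain ⟨e, he⟩ := (hcnt.mono hSsub).exists_eq_range hSne
  have heS : ∀ k, e k ∈ S := fun k => he ▸ mem_range_self k
  -- cumulative unions
  let R : ℕ → Set Y := fun n => Nat.rec (e 0) (fun k Rk => Rk ∪ e (k + 1)) n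
  have hRS : ∀ n, R n ∈ S := by
    intro n
    induction n with
    | zero => exact heS 0
    | succ k ih =>
      refine ⟨hunion _ (hSsub ih) _ (hSsub (heS (k+1))), Or.inl ih.2.1, ?_⟩
      exact union_subset ih.2.2 (heS (k+1)).2.2
  have hRmono : ∀ k n, k ≤ n → e k ⊆ R n := by
    intro k n hkn
    induction n with
    | zero => obtain rfl := Nat.le_zero.1 hkn; exact subset_refl _
    | succ m ih =>
      rcases Nat.lt_or_ge k (m+1) with h | h
      · exact (ih (Nat.lt_succ_iff.1 h)).trans subset_union_left
      · have : k = m + 1 := le_antisymm hkn h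
        subst this; exact subset_union_right
  by_contra hcon
  push_neg at hcon
  have hpick : ∀ n, ∃ z, z ∈ F n ∧ z ∉ R n := by
    intro n
    have := hcon (R n) (hSsub (hRS n)) (hRS n).2.1 (hRS n).2.2 n
    exact Set.not_subset.1 this
  choose a haF haR using hpick
  set A : Set Y := range a with hA
  have hclo : y ∈ closure A := by
    rw [mem_closure_iff]
    intro o ho hyo
    obtain ⟨n, hn⟩ := hF o ho hyo
    exact ⟨a n, hn (haF n), mem_range_self n⟩
  have hane : ∀ n, a n ≠ y := fun n h => haR n (h ▸ (hRS n).2.1)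
  have hacc : AccPt y (𝓟 A) := by
    rw [accPt_iff_nhds]
    intro V hV
    obtain ⟨o, hoV, ho, hyo⟩ := mem_nhds_iff.1 hV
    obtain ⟨n, hn⟩ := hF o ho hyo
    exact ⟨a n, ⟨hoV (hn (haF n)), mem_range_self n⟩, hane n⟩
  obtain ⟨P, hPQ, hyP, hPU, hinf⟩ := hP A y hclo U hU hyU
  have hPS : P ∈ S := ⟨hsub hPQ, hyP, hPU⟩
  obtain ⟨k, hk⟩ : ∃ k, e k = P := by
    have := he ▸ hPS; exact this
  have : P ∩ A ⊆ a '' (Iio k) := by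
    rintro z ⟨hzP, ⟨n, rfl⟩⟩
    rcases Nat.lt_or_ge n k with h | h
    · exact mem_image_of_mem a h
    · exact absurd ((hk ▸ hRmono k n h) hzP) (haR n)
  exact ((finite_Iio k).image a).subset this |>.not_infinite (hinf hacc)

/-- finite-coordinate-determined subsets of the chain space are closed -/
lemma isClosed_findet (I : Finset (ℕ × ℕ)) (P : (ℕ → ℕ → Bool) → Prop)
    (h : ∀ χ χ' : ℕ → ℕ → Bool, (∀ p ∈ I, χ p.1 p.2 = χ' p.1 p.2) → P χ → P χ') :
    IsClosed {χ : ℕ → ℕ → Bool | P χ} := by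
  rw [← isOpen_compl_iff, isOpen_iff_forall_mem_open]
  intro χ hχ
  refine ⟨{χ' | ∀ p ∈ I, χ' p.1 p.2 = χ p.1 p.2}, ?_, ?_, fun p hp => rfl⟩
  · intro χ' hagree hPχ'
    exact hχ (h χ' χ hagree hPχ')
  · have heq : {χ' : ℕ → ℕ → Bool | ∀ p ∈ I, χ' p.1 p.2 = χ p.1 p.2} =
        ⋂ p ∈ I, {χ' : ℕ → ℕ → Bool | χ' p.1 p.2 = χ p.1 p.2} := by
      ext χ'; simp
    rw [heq]
    refine isOpen_biInter_finset fun p _ => ?_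
    have hc : Continuous fun χ' : ℕ → ℕ → Bool => χ' p.1 p.2 :=
      (continuous_apply p.2).comp (continuous_apply p.1)
    exact (isOpen_discrete ({χ p.1 p.2} : Set Bool)).preimage hc

lemma isOpen_rowcyl (n : ℕ) (χ : ℕ → ℕ → Bool) :
    IsOpen {χ' : ℕ → ℕ → Bool | ∀ i ≤ n, χ' n i = χ n i} := by
  have heq : {χ' : ℕ → ℕ → Bool | ∀ i ≤ n, χ' n i = χ n i} =
      ⋂ i ∈ Finset.range (n+1), {χ' : ℕ → ℕ → Bool | χ' n i = χ n i} := by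
    ext χ'; simp [Nat.lt_succ_iff]
  rw [heq]
  refine isOpen_biInter_finset fun i _ => ?_
  have hc : Continuous fun χ' : ℕ → ℕ → Bool => χ' n i :=
    (continuous_apply i).comp (continuous_apply n)
  exact (isOpen_discrete ({χ n i} : Set Bool)).preimage hc

/-- the `m`-th stage of a chain -/
def Tset (N : ℕ → Set X) (χ : ℕ → ℕ → Bool) (m : ℕ) : Set X :=
  {x | ∀ i ≤ m, χ m i = true → x ∈ N i}

lemma Tset_rowdet {N : ℕ → Set X} {χ χ' : ℕ → ℕ → Bool} {m : ℕ}
    (h : ∀ i ≤ m, χ m i = χ' m i) : Tset N χ m = Tset N χ' m := by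
  ext x; constructor <;> intro hx i him hi
  · exact hx i him ((h i him) ▸ hi)
  · exact hx i him ((h i him).symm ▸ hi)

lemma isClosed_Tset {N : ℕ → Set X} (hN : ∀ i, IsClosed (N i)) (χ : ℕ → ℕ → Bool) (m : ℕ) :
    IsClosed (Tset N χ m) := by
  have : Tset N χ m = ⋂ i, ⋂ (_ : i ≤ m), ⋂ (_ : χ m i = true), N i := by
    ext x; simp [Tset]
  rw [this]
  exact isClosed_iInter fun i => isClosed_iInter fun _ => isClosed_iInter fun _ => hN i

/-- A chain system over a compact set `K`. -/
structure ChainSys (N : ℕ → Set X) (K : Set X) where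
  L : Set (ℕ → ℕ → Bool)
  compact : IsCompact L
  Tanti : ∀ χ ∈ L, ∀ m m' : ℕ, m ≤ m' → Tset N χ m' ⊆ Tset N χ m
  TmemN : ∀ χ ∈ L, ∀ m, ∃ k, N k = Tset N χ m
  wit : ∀ χ ∈ L, ∃ x, x ∈ K ∧ x ∈ ⋂ m, Tset N χ m
  network : ∀ χ ∈ L, ∀ x, x ∈ K → x ∈ (⋂ m, Tset N χ m) →
    ∀ G : Set X, IsOpen G → x ∈ G → ∃ m, Tset N χ m ⊆ G
  covers : ∀ x ∈ K, ∃ χ ∈ L, x ∈ ⋂ m, Tset N χ m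

lemma exists_chainSys [RegularSpace X] (N : ℕ → Set X)
    (hNcl : ∀ i, IsClosed (N i)) (hNuniv : ∃ i, N i = univ)
    (hNint : ∀ i j, ∃ k, N k = N i ∩ N j)
    (habs : ∀ K U : Set X, IsCompact K → IsOpen U → K ⊆ U → ∃ i, K ⊆ N i ∧ N i ⊆ U)
    {K : Set X} (hK : IsCompact K) : Nonempty (ChainSys N K) := by
  classical
  -- relative-neighbourhood complements
  have relC : ∀ x ∈ K, ∀ G : Set X, IsOpen G → x ∈ G →
      ∃ d, x ∉ N d ∧ closure ((N d)ᶜ ∩ K) ⊆ G := by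
    intro x hxK G hG hxG
    obtain ⟨t, htn, htcl, htG⟩ := exists_mem_nhds_isClosed_subset (hG.mem_nhds hxG)
    set O : Set X := interior t with hO
    have hxO : x ∈ O := mem_interior_iff_mem_nhds.2 htn
    obtain ⟨t', htn', htcl', htO'⟩ := exists_mem_nhds_isClosed_subset (isOpen_interior.mem_nhds hxO)
    have hKO : IsCompact (K \ O) := hK.diff isOpen_interior
    have hsub : K \ O ⊆ (t')ᶜ := fun y hy hyt' => hy.2 (htO' hyt')
    obtain ⟨d, hd1, hd2⟩ := habs (K \ O) _ hKO htcl'.isOpen_compl hsub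
    refine ⟨d, fun hx => (hd2 hx) (mem_of_mem_nhds htn'), ?_⟩
    have h1 : (N d)ᶜ ∩ K ⊆ O := by
      rintro y ⟨hyN, hyK⟩
      by_contra hyO
      exact hyN (hd1 ⟨hyK, hyO⟩)
    exact (closure_mono h1).trans ((closure_minimal interior_subset htcl).trans htG)
  -- valid triples and covering pieces
  set valid : ℕ → ℕ → ℕ → Prop := fun b c d =>
    closure ((N b)ᶜ ∩ K) ⊆ (N c)ᶜ ∧ closure ((N c)ᶜ ∩ K) ⊆ (N d)ᶜ with hvalid
  have hpieces : ∀ b c d : ℕ, ∃ p : ℕ × ℕ, valid b c d →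
      ((K ∩ closure ((N c)ᶜ ∩ K) ⊆ N p.1 ∧ N p.1 ⊆ (N d)ᶜ) ∧
       (K ∩ N c ⊆ N p.2 ∧ N p.2 ⊆ (closure ((N b)ᶜ ∩ K))ᶜ)) := by
    intro b c d
    by_cases hv : valid b c d
    · obtain ⟨i1, hi1a, hi1b⟩ := habs (K ∩ closure ((N c)ᶜ ∩ K)) ((N d)ᶜ)
        (hK.inter_right isClosed_closure) (hNcl d).isOpen_compl
        (fun y hy => hv.2 hy.2)
      obtain ⟨i2, hi2a, hi2b⟩ := habs (K ∩ N c) ((closure ((N b)ᶜ ∩ K))ᶜ)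
        (hK.inter_right (hNcl c)) isClosed_closure.isOpen_compl
        (fun y hy hyc => (hv.1 hyc) hy.2)
      exact ⟨(i1, i2), fun _ => ⟨⟨hi1a, hi1b⟩, ⟨hi2a, hi2b⟩⟩⟩
    · exact ⟨(0, 0), fun hv' => absurd hv' hv⟩
  choose pc hpc using hpieces
  have hcover : ∀ b c d, valid b c d → K ⊆ N (pc b c d).1 ∪ N (pc b c d).2 := by
    intro b c d hv x hx
    by_cases hxc : x ∈ N c
    · exact Or.inr ((hpc b c d hv).2.1 ⟨hx, hxc⟩)
    · exact Or.inl ((hpc b c d hv).1.1 ⟨hx, subset_closure ⟨hxc, hx⟩⟩)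
  have hSEP : ∀ x ∈ K, ∀ G : Set X, IsOpen G → x ∈ G →
      ∃ b c d, valid b c d ∧ x ∉ N b ∧ (N d)ᶜ ∩ K ⊆ G := by
    intro x hxK G hG hxG
    obtain ⟨d, hdx, hdG⟩ := relC x hxK G hG hxG
    obtain ⟨c, hcx, hcd⟩ := relC x hxK ((N d)ᶜ) (hNcl d).isOpen_compl hdx
    obtain ⟨b, hbx, hbc⟩ := relC x hxK ((N c)ᶜ) (hNcl c).isOpen_compl hcx
    exact ⟨b, c, d, ⟨hbc, hcd⟩, hbx, fun y hy => hdG (subset_closure hy)⟩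
  -- the chain space
  set L : Set (ℕ → ℕ → Bool) := {χ |
    (∀ m i, χ m i = true → i ≤ m) ∧ (∀ m i, χ m i = true → χ (m+1) i = true) ∧
    ∀ m, (K ∩ Tset N χ m).Nonempty ∧
      (∀ i ≤ m, K ∩ Tset N χ m ⊆ N i → χ m i = true) ∧
      (∀ b c d, valid b c d → b ≤ m → c ≤ m → d ≤ m → (pc b c d).1 ≤ m → (pc b c d).2 ≤ m →
        (χ m (pc b c d).1 = true ∨ χ m (pc b c d).2 = true)) } with hLdef
  have hmono' : ∀ χ ∈ L, ∀ i m m', m ≤ m' → χ m i = true → χ m' i = true := by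
    intro χ hχ i m m' hmm
    induction m', hmm using Nat.le_induction with
    | base => exact id
    | succ n hn ih => exact fun h => hχ.2.1 n i (ih h)
  have hTanti : ∀ χ ∈ L, ∀ m m' : ℕ, m ≤ m' → Tset N χ m' ⊆ Tset N χ m := by
    intro χ hχ m m' hmm x hx i him hi
    exact hx i (him.trans hmm) (hmono' χ hχ i m m' hmm hi)
  have hfinN : ∀ s : Finset ℕ, ∃ k, N k = ⋂ i ∈ s, N i := by
    intro s
    induction s using Finset.induction with
    | empty => obtain ⟨i0, hi0⟩ := hNuniv; exact ⟨i0, by simp [hi0]⟩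
    | @insert a s ha ih =>
      obtain ⟨k, hk⟩ := ih
      obtain ⟨k', hk'⟩ := hNint a k
      refine ⟨k', ?_⟩
      rw [hk', hk]
      simp
  have hTmem : ∀ χ ∈ L, ∀ m, ∃ k, N k = Tset N χ m := by
    intro χ _ m
    obtain ⟨k, hk⟩ := hfinN ((Finset.range (m+1)).filter (fun i => χ m i = true))
    refine ⟨k, hk.trans ?_⟩
    ext x
    simp only [mem_iInter, Finset.mem_filter, Finset.mem_range, Nat.lt_succ_iff, Tset,
      mem_setOf_eq]
    exact ⟨fun h i him hi => h i ⟨him, hi⟩, fun h i hi => h i hi.1 hi.2⟩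
  have hwit : ∀ χ ∈ L, ∃ x, x ∈ K ∧ x ∈ ⋂ m, Tset N χ m := by
    intro χ hχ
    have hne : ∀ u : Finset ℕ, (K ∩ ⋂ m ∈ u, Tset N χ m).Nonempty := by
      intro u
      obtain ⟨y, hy⟩ := ((hχ.2.2 (u.sup id)).1 : (K ∩ Tset N χ (u.sup id)).Nonempty)
      refine ⟨y, hy.1, ?_⟩
      simp only [mem_iInter]
      intro m hm
      exact hTanti χ hχ m (u.sup id) (Finset.le_sup (f := id) hm) hy.2
    obtain ⟨x, hx⟩ := hK.inter_iInter_nonempty (fun m => Tset N χ m)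
      (fun m => isClosed_Tset hNcl χ m) hne
    exact ⟨x, hx.1, hx.2⟩
  have hnet : ∀ χ ∈ L, ∀ x, x ∈ K → x ∈ (⋂ m, Tset N χ m) →
      ∀ G : Set X, IsOpen G → x ∈ G → ∃ m, Tset N χ m ⊆ G := by
    intro χ hχ x hxK hxT G hG hxG
    have hxTm : ∀ m, x ∈ Tset N χ m := by
      intro m; exact (mem_iInter.1 hxT) m
    have hstep1 : ∃ m₀, K ∩ Tset N χ m₀ ⊆ G := by
      by_contra hcon
      push_neg at hcon
      have hne : ∀ u : Finset ℕ, ((K \ G) ∩ ⋂ m ∈ u, Tset N χ m).Nonempty := by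
        intro u
        rcases Set.not_subset.1 (hcon (u.sup id)) with ⟨y, hy1, hy2⟩
        refine ⟨y, ⟨hy1.1, hy2⟩, ?_⟩
        simp only [mem_iInter]
        intro m hm
        exact hTanti χ hχ m (u.sup id) (Finset.le_sup (f := id) hm) hy1.2
      obtain ⟨y, hy⟩ := (hK.diff hG).inter_iInter_nonempty (fun m => Tset N χ m)
        (fun m => isClosed_Tset hNcl χ m) hne
      obtain ⟨b, c, d, hv, hxb, hdG⟩ := hSEP x hxK G hG hxG
      set m := b + c + d + (pc b c d).1 + (pc b c d).2 with hm
      have hc3 := (hχ.2.2 m).2.2 b c d hv (by omega) (by omega) (by omega) (by omega) (by omega)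
      rcases hc3 with h1 | h2
      · have hyT : y ∈ Tset N χ m := (mem_iInter.1 hy.2) m
        have hyN : y ∈ N (pc b c d).1 := hyT _ (by omega) h1
        exact hy.1.2 (hdG ⟨(hpc b c d hv).1.2 hyN, hy.1.1⟩)
      · have hxN : x ∈ N (pc b c d).2 := hxTm m _ (by omega) h2
        exact ((hpc b c d hv).2.2 hxN) (subset_closure ⟨hxb, hxK⟩)
    obtain ⟨m₀, hm₀⟩ := hstep1
    obtain ⟨i, hi1, hi2⟩ := habs (K ∩ Tset N χ m₀) G
      (hK.inter_right (isClosed_Tset hNcl χ m₀)) hG hm₀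
    refine ⟨max m₀ i, fun z hz => hi2 (hz i (le_max_right _ _) ?_)⟩
    refine (hχ.2.2 (max m₀ i)).2.1 i (le_max_right _ _) ?_
    intro w hw
    exact hi1 ⟨hw.1, hTanti χ hχ m₀ (max m₀ i) (le_max_left _ _) hw.2⟩
  have hcovers : ∀ x ∈ K, ∃ χ ∈ L, x ∈ ⋂ m, Tset N χ m := by
    intro x hxK
    set χx : ℕ → ℕ → Bool := fun m i => if (i ≤ m ∧ x ∈ N i) then true else false with hχx
    have hspec : ∀ m i, χx m i = true ↔ (i ≤ m ∧ x ∈ N i) := by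
      intro m i
      by_cases h : (i ≤ m ∧ x ∈ N i) <;> simp [hχx, h]
    have hxT : ∀ m, x ∈ Tset N χx m := by
      intro m i him hi
      exact ((hspec m i).1 hi).2
    have hmem : χx ∈ L := by
      refine ⟨fun m i hi => ((hspec m i).1 hi).1, ?_, ?_⟩
      · intro m i hi
        obtain ⟨h1, h2⟩ := (hspec m i).1 hi
        exact (hspec (m+1) i).2 ⟨h1.trans (Nat.le_succ m), h2⟩
      · intro m
        refine ⟨⟨x, hxK, hxT m⟩, ?_, ?_⟩
        · intro i him hsub
          exact (hspec m i).2 ⟨him, hsub ⟨hxK, hxT m⟩⟩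
        · intro b c d hv _ _ _ h1 h2
          rcases hcover b c d hv hxK with h | h
          · exact Or.inl ((hspec m _).2 ⟨h1, h⟩)
          · exact Or.inr ((hspec m _).2 ⟨h2, h⟩)
    exact ⟨χx, hmem, mem_iInter.2 hxT⟩
  -- closedness and compactness
  have hLclosed : IsClosed L := by
    have hLeq : L =
        ((⋂ m, ⋂ i, {χ : ℕ → ℕ → Bool | χ m i = true → i ≤ m}) ∩
         (⋂ m, ⋂ i, {χ : ℕ → ℕ → Bool | χ m i = true → χ (m+1) i = true})) ∩
        ⋂ m, ({χ : ℕ → ℕ → Bool | (K ∩ Tset N χ m).Nonempty} ∩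
          ({χ : ℕ → ℕ → Bool | ∀ i ≤ m, K ∩ Tset N χ m ⊆ N i → χ m i = true} ∩
           {χ : ℕ → ℕ → Bool | ∀ b c d, valid b c d → b ≤ m → c ≤ m → d ≤ m →
              (pc b c d).1 ≤ m → (pc b c d).2 ≤ m →
              (χ m (pc b c d).1 = true ∨ χ m (pc b c d).2 = true)})) := by
      ext χ
      simp only [hLdef, mem_setOf_eq, mem_inter_iff, mem_iInter]
      tauto
    rw [hLeq]
    have hrow : ∀ m : ℕ, ∀ χ χ' : ℕ → ℕ → Bool,
        (∀ p ∈ (Finset.range (m+1)).image (fun i => (m, i)), χ p.1 p.2 = χ' p.1 p.2) →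
        (∀ i ≤ m, χ m i = χ' m i) := by
      intro m χ χ' h i him
      exact h (m, i) (Finset.mem_image_of_mem _ (Finset.mem_range.2 (Nat.lt_succ_of_le him)))
    refine IsClosed.inter (IsClosed.inter ?_ ?_) ?_
    · refine isClosed_iInter fun m => isClosed_iInter fun i => ?_
      refine isClosed_findet {(m, i)} _ ?_
      intro χ χ' h hP hi
      exact hP ((h (m, i) (Finset.mem_singleton_self _)) ▸ hi)
    · refine isClosed_iInter fun m => isClosed_iInter fun i => ?_
      refine isClosed_findet {(m, i), (m+1, i)} _ ?_
      intro χ χ' h hP hi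
      have h1 := h (m, i) (by simp)
      have h2 := h (m+1, i) (by simp)
      exact h2 ▸ (hP (h1 ▸ hi))
    · refine isClosed_iInter fun m => IsClosed.inter ?_ (IsClosed.inter ?_ ?_)
      · refine isClosed_findet ((Finset.range (m+1)).image (fun i => (m, i))) _ ?_
        intro χ χ' h hP
        have heq : Tset N χ m = Tset N χ' m := Tset_rowdet (fun i him => hrow m χ χ' h i him)
        rwa [heq] at hP
      · refine isClosed_findet ((Finset.range (m+1)).image (fun i => (m, i))) _ ?_
        intro χ χ' h hP i him hsub
        have heq : Tset N χ m = Tset N χ' m := Tset_rowdet (fun i him => hrow m χ χ' h i him)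
        rw [← hrow m χ χ' h i him]
        refine hP i him ?_
        rwa [heq]
      · refine isClosed_findet ((Finset.range (m+1)).image (fun i => (m, i))) _ ?_
        intro χ χ' h hP b c d hv hb hc hd h1 h2
        rcases hP b c d hv hb hc hd h1 h2 with hh | hh
        · exact Or.inl ((hrow m χ χ' h _ h1) ▸ hh)
        · exact Or.inr ((hrow m χ χ' h _ h2) ▸ hh)
  exact ⟨⟨L, hLclosed.isCompact, hTanti, hTmem, hwit, hnet, hcovers⟩⟩

/-- The cluster lemma. -/
lemma cluster_lemma {N : ℕ → Set X} {K : Set X} (CS : ChainSys N K)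
    {α : Type*} {B : Set α} (hB : B.Infinite)
    {p : α → (ℕ → ℕ → Bool)} (hp : ∀ a ∈ B, p a ∈ CS.L)
    {dep : α → ℕ} (hdep : ∀ r : ℕ, {a | a ∈ B ∧ dep a ≤ r}.Finite)
    {z : α → X} (hz : ∀ a ∈ B, z a ∈ Tset N (p a) (dep a)) :
    ∃ x ∈ K, ∀ G : Set X, IsOpen G → x ∈ G → {a | a ∈ B ∧ z a ∈ G}.Infinite := by
  classical
  set F : Filter α := Filter.cofinite ⊓ 𝓟 B with hFdef
  haveI hFne : F.NeBot := by
    rw [hFdef, Filter.inf_principal_neBot_iff]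
    intro U hU
    exact ((hB.diff hU).mono (fun a ha => ⟨Set.notMem_compl_iff.1 ha.2, ha.1⟩ : B \ Uᶜ ⊆ U ∩ B)).nonempty
  have hFle : Filter.map p F ≤ 𝓟 CS.L := by
    rw [Filter.le_principal_iff, Filter.mem_map]
    exact Filter.mem_of_superset (Filter.mem_inf_of_right (Filter.mem_principal_self B)) hp
  obtain ⟨χ, hχL, hcl⟩ := CS.compact.exists_clusterPt hFle
  obtain ⟨x, hxK, hxT⟩ := CS.wit χ hχL
  refine ⟨x, hxK, ?_⟩
  intro G hG hxG
  obtain ⟨m, hm⟩ := CS.network χ hχL x hxK hxT G hG hxG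
  by_contra hfin
  rw [Set.not_infinite] at hfin
  have hV : {χ' : ℕ → ℕ → Bool | ∀ i ≤ m, χ' m i = χ m i} ∈ 𝓝 χ :=
    (isOpen_rowcyl m χ).mem_nhds (fun i _ => rfl)
  have hfreq : ∃ᶠ a in F, (∀ i ≤ m, (p a) m i = χ m i) := by
    have h1 : ∃ᶠ χ' in Filter.map p F, χ' ∈ {χ' : ℕ → ℕ → Bool | ∀ i ≤ m, χ' m i = χ m i} :=
      ((𝓝 χ).basis_sets.clusterPt_iff_frequently).1 hcl _ hV
    exact Filter.frequently_map.1 h1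
  have hev : ∀ᶠ a in F, (a ∉ {a | a ∈ B ∧ z a ∈ G} ∧ ¬(a ∈ B ∧ dep a ≤ m)) ∧ a ∈ B := by
    refine Filter.eventually_and.2 ⟨Filter.mem_inf_of_left ?_, Filter.mem_inf_of_right ?_⟩
    · have h1 : {a | a ∈ B ∧ z a ∈ G}ᶜ ∈ (Filter.cofinite : Filter α) := hfin.compl_mem_cofinite
      have h2 : {a | a ∈ B ∧ dep a ≤ m}ᶜ ∈ (Filter.cofinite : Filter α) :=
        (hdep m).compl_mem_cofinite
      filter_upwards [h1, h2] with a ha1 ha2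
      exact ⟨ha1, ha2⟩
    · exact Filter.mem_principal_self B
  obtain ⟨a, hrow, ⟨hnG, hndep⟩, haB⟩ := (hfreq.and_eventually hev).exists
  have hdepm : m ≤ dep a := by
    by_contra h
    exact hndep ⟨haB, le_of_not_ge h⟩
  have hzT : z a ∈ Tset N (p a) m := CS.Tanti (p a) (hp a haB) m (dep a) hdepm (hz a haB)
  have heq : Tset N (p a) m = Tset N χ m := Tset_rowdet hrow
  rw [heq] at hzT
  exact hnG ⟨haB, hm hzT⟩

/-- tuple of catching pairs at a given depth. -/
lemma exists_tuple {N : ℕ → Set X} {K : Set X} (CS : ChainSys N K)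
    {𝒬 Q' : Set (Set Y)} (hP : IsPytkeevNetwork 𝒬) (hsub : 𝒬 ⊆ Q') (hcnt : Q'.Countable)
    (hunion : ∀ p ∈ Q', ∀ q ∈ Q', p ∪ q ∈ Q')
    (f : C(X, Y)) {U : Set Y} (hU : IsOpen U) (hfKU : MapsTo f K U)
    {E : Set Y} (hE : E ∈ Q') (hEU : E ⊆ U) (r : ℕ) :
    ∃ pcs : Set ((ℕ → ℕ → Bool) × ℕ × Set Y), pcs.Finite ∧
      (∀ q ∈ pcs, q.1 ∈ CS.L ∧ r ≤ q.2.1 ∧ q.2.2 ∈ Q' ∧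
        MapsTo f (Tset N q.1 q.2.1) q.2.2 ∧ q.2.2 ⊆ U ∧ E ⊆ q.2.2) ∧
      K ⊆ ⋃ q ∈ pcs, Tset N q.1 q.2.1 := by
  classical
  have hper : ∀ χ ∈ CS.L, ∃ n Q, r ≤ n ∧ Q ∈ Q' ∧ MapsTo f (Tset N χ n) Q ∧ Q ⊆ U ∧ E ⊆ Q := by
    intro χ hχ
    obtain ⟨x, hxK, hxT⟩ := CS.wit χ hχ
    have hfx : f x ∈ U := hfKU hxK
    have hF : ∀ W : Set Y, IsOpen W → f x ∈ W → ∃ n, f '' (Tset N χ n) ⊆ W := by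
      intro W hW hfxW
      obtain ⟨n, hn⟩ := CS.network χ hχ x hxK hxT (f ⁻¹' W) (hW.preimage f.continuous) hfxW
      exact ⟨n, image_subset_iff.2 hn⟩
    obtain ⟨Q, hQQ', hfxQ, hQU, n₀, hn₀⟩ := lemmaA hP hsub hcnt hunion hU hfx
      (fun n => f '' (Tset N χ n)) hF
    refine ⟨max n₀ r, Q ∪ E, le_max_right _ _, hunion Q hQQ' E hE, ?_,
      union_subset hQU hEU, subset_union_right⟩
    intro w hw
    exact Or.inl (hn₀ (mem_image_of_mem f (CS.Tanti χ hχ n₀ (max n₀ r) (le_max_left _ _) hw)))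
  choose! nn QQ hr hQ'mem hmaps hQUsub hEQ using hper
  obtain ⟨t, htL, htcov⟩ := CS.compact.elim_nhds_subcover
    (fun χ => {χ' : ℕ → ℕ → Bool | ∀ i ≤ nn χ, χ' (nn χ) i = χ (nn χ) i})
    (fun χ hχ => (isOpen_rowcyl (nn χ) χ).mem_nhds (fun i _ => rfl))
  refine ⟨(fun χ => (χ, nn χ, QQ χ)) '' ↑t, (t.finite_toSet.image _), ?_, ?_⟩
  · rintro q ⟨χ, hχt, rfl⟩
    have hχL := htL χ hχt
    exact ⟨hχL, hr χ hχL, hQ'mem χ hχL, hmaps χ hχL, hQUsub χ hχL, hEQ χ hχL⟩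
  · intro x hxK
    obtain ⟨χx, hχxL, hxT⟩ := CS.covers x hxK
    obtain ⟨χ, hχt, hχcyl⟩ := Set.mem_iUnion₂.1 (htcov hχxL)
    have hrow : ∀ i ≤ nn χ, χx (nn χ) i = χ (nn χ) i := hχcyl
    have hx1 : x ∈ Tset N χx (nn χ) := (mem_iInter.1 hxT) (nn χ)
    have heq : Tset N χx (nn χ) = Tset N χ (nn χ) := Tset_rowdet hrow
    rw [heq] at hx1
    exact Set.mem_biUnion (Set.mem_image_of_mem _ hχt) hx1

lemma mapsTo_closed_isClosed [T1Space Y] {K : Set X} {C : Set Y} (hC : IsClosed C) :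
    IsClosed {g : C(X, Y) | MapsTo g K C} := by
  rw [← isOpen_compl_iff]
  have : {g : C(X, Y) | MapsTo g K C}ᶜ = ⋃ x ∈ K, {g : C(X, Y) | MapsTo g {x} Cᶜ} := by
    ext g
    simp only [mem_compl_iff, mem_setOf_eq, MapsTo, mem_iUnion]
    constructor
    · intro h
      push_neg at h
      obtain ⟨x, hxK, hgx⟩ := h
      exact ⟨x, hxK, by simp [Set.mapsTo_singleton, hgx]⟩
    · rintro ⟨x, hxK, hg⟩ hcon
      exact (hg (mem_singleton x)) (hcon hxK)
  rw [this]
  exact isOpen_biUnion fun x _ =>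
    ContinuousMap.isOpen_setOf_mapsTo isCompact_singleton hC.isOpen_compl

lemma ck_regular [RegularSpace Y] [T1Space Y] : RegularSpace C(X, Y) := by
  refine RegularSpace.of_exists_mem_nhds_isClosed_subset ?_
  intro f s hs
  obtain ⟨o, hos, ho, hfo⟩ := mem_nhds_iff.1 hs
  obtain ⟨b, hb, hfb, hbo⟩ := (isTopologicalBasis_of_subbasis
    (ContinuousMap.compactOpen_eq (X := X) (Y := Y))).exists_subset_of_mem_open hfo ho
  obtain ⟨Fs, ⟨hFfin, hFsub⟩, rfl⟩ := hb
  have hdata : ∀ m ∈ Fs, ∃ KU : Set X × Set Y, IsCompact KU.1 ∧ IsOpen KU.2 ∧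
      m = {g : C(X, Y) | MapsTo g KU.1 KU.2} := by
    intro m hm
    obtain ⟨K, hK, U, hU, rfl⟩ := hFsub hm
    exact ⟨(K, U), hK, hU, rfl⟩
  choose! KU hKc hUo hmeq using hdata
  have hVs : ∀ m ∈ Fs, ∃ V : Set Y, IsOpen V ∧ f '' (KU m).1 ⊆ V ∧ closure V ⊆ (KU m).2 := by
    intro m hm
    have hfm : MapsTo f (KU m).1 (KU m).2 := by
      have := hfb
      rw [Set.mem_sInter] at this
      have h2 := this m hm
      rw [hmeq m hm] at h2
      exact h2
    exact sandwich ((hKc m hm).image f.continuous) (hUo m hm) (image_subset_iff.2 hfm)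
  choose! V hVo hfV hVcl using hVs
  refine ⟨⋂ m ∈ Fs, {g : C(X, Y) | MapsTo g (KU m).1 (closure (V m))}, ?_, ?_, ?_⟩
  · rw [mem_nhds_iff]
    refine ⟨⋂ m ∈ Fs, {g : C(X, Y) | MapsTo g (KU m).1 (V m)}, ?_, ?_, ?_⟩
    · exact iInter₂_mono fun m hm => fun g hg => hg.mono_right subset_closure
    · exact hFfin.isOpen_biInter fun m hm =>
        ContinuousMap.isOpen_setOf_mapsTo (hKc m hm) (hVo m hm)
    · exact mem_iInter₂.2 fun m hm => image_subset_iff.1 (hfV m hm)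
  · exact isClosed_biInter fun m hm => mapsTo_closed_isClosed isClosed_closure
  · refine subset_trans ?_ (hbo.trans hos)
    intro g hg
    rw [Set.mem_sInter]
    intro m hm
    rw [hmeq m hm]
    exact ((mem_iInter₂.1 hg) m hm).mono_right (hVcl m hm)

end CkP0

open CkP0

/-- For every ℵ₀-space `X` and every Pytkeev ℵ₀-space `Y`, the space `C_k(X, Y)` of
continuous maps with the compact-open topology is a Pytkeev ℵ₀-space. -/
theorem ck_pytkeev_aleph0 (X Y : Type*) [TopologicalSpace X] [TopologicalSpace Y]
    (hX : Aleph0Space X) (hY : PytkeevAleph0Space Y) :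
    PytkeevAleph0Space C(X, Y) := by
  classical
  obtain ⟨hXreg, 𝒩, h𝒩cnt, h𝒩k⟩ := hX
  obtain ⟨hYreg, 𝒬, h𝒬cnt, h𝒬P⟩ := hY
  haveI := hXreg; haveI := hYreg
  haveI hT1 : T1Space Y := t1_of_pytkeev h𝒬P
  obtain ⟨N, hNcl, hNuniv, hNint, habs⟩ := exists_goodN h𝒩cnt h𝒩k
  -- Y-side countable union-closed family Q'
  obtain ⟨q0, hq0⟩ : ∃ q0 : ℕ → Set Y, 𝒬 ∪ {∅} = range q0 :=
    (h𝒬cnt.union (countable_singleton _)).exists_eq_range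
      (by exact ⟨∅, Or.inr rfl⟩)
  set Qe : Finset ℕ → Set Y := fun F => ⋃ k ∈ F, q0 k with hQe
  set Q' : Set (Set Y) := range Qe with hQ'def
  have hQ'cnt : Q'.Countable := countable_range Qe
  have hsub𝒬 : 𝒬 ⊆ Q' := by
    intro Q hQ
    have hQr : Q ∈ range q0 := hq0 ▸ Or.inl hQ
    obtain ⟨k, hk⟩ := hQr
    exact ⟨{k}, by simp [hQe, hk]⟩
  have hQ'union : ∀ p ∈ Q', ∀ q ∈ Q', p ∪ q ∈ Q' := by
    rintro p ⟨F1, rfl⟩ q ⟨F2, rfl⟩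
    refine ⟨F1 ∪ F2, ?_⟩
    simp only [hQe]
    ext y
    simp only [mem_iUnion, Finset.mem_union, mem_union, exists_prop]
    constructor
    · rintro ⟨k, hk | hk, hy⟩
      exacts [Or.inl ⟨k, hk, hy⟩, Or.inr ⟨k, hk, hy⟩]
    · rintro (⟨k, hk, hy⟩ | ⟨k, hk, hy⟩)
      exacts [⟨k, Or.inl hk, hy⟩, ⟨k, Or.inr hk, hy⟩]
  have hQ'empty : (∅ : Set Y) ∈ Q' := ⟨∅, by simp [hQe]⟩
  -- the candidate Pytkeev network on C(X,Y)
  set PP : List (ℕ × Finset ℕ) → Set C(X, Y) := fun l =>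
    {g | ∀ pr ∈ l, MapsTo g (N pr.1) (Qe pr.2)} with hPPdef
  set PB : Set (Set C(X, Y)) := range PP with hPBdef
  haveI : RegularSpace C(X, Y) := ck_regular
  refine ⟨inferInstance, PB, countable_range PP, ?_⟩
  intro A f hfA O hO hfO
  -- dispose of the case of empty X
  rcases isEmpty_or_nonempty X with hX0 | hX0
  · haveI hsub : Subsingleton C(X, Y) :=
      ⟨fun g h => ContinuousMap.ext fun x => (hX0.false x).elim⟩
    refine ⟨PP [], ⟨[], rfl⟩, by simp [hPPdef], ?_, ?_⟩
    · intro g _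
      rwa [Subsingleton.elim g f]
    · intro hAcc
      exfalso
      have h1 : ({f}ᶜ : Set C(X, Y)) = ∅ := by
        ext g; simp [Subsingleton.elim g f]
      have h2 : 𝓝[≠] f = ⊥ := by
        rw [show ((𝓝[≠] f : Filter C(X,Y)) = 𝓝[{f}ᶜ] f) from rfl, h1, nhdsWithin_empty]
      exact hAcc.ne (by rw [AccPt] at *; rw [h2, bot_inf_eq])
  -- basic neighborhood
  obtain ⟨b, hbB, hfb, hbO⟩ := (isTopologicalBasis_of_subbasis
    (ContinuousMap.compactOpen_eq (X := X) (Y := Y))).exists_subset_of_mem_open hfO hO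
  obtain ⟨Fs, ⟨hFfin, hFsub⟩, rfl⟩ := hbB
  have hdata : ∀ s ∈ Fs, ∃ KU : Set X × Set Y, IsCompact KU.1 ∧ IsOpen KU.2 ∧
      s = {g : C(X, Y) | MapsTo g KU.1 KU.2} := by
    intro s hs
    obtain ⟨K, hK, U, hU, rfl⟩ := hFsub hs
    exact ⟨(K, U), hK, hU, rfl⟩
  choose! KU hKc hUo hseq using hdata
  have hfD : ∀ s ∈ Fs, MapsTo f (KU s).1 (KU s).2 := by
    intro s hs
    have h2 := (Set.mem_sInter.1 hfb) s hs
    rw [hseq s hs] at h2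
    exact h2
  -- chain systems
  have hCS : ∀ s : Set C(X,Y), ∀ _ : s ∈ Fs, ChainSys N (KU s).1 := fun s hs =>
    (exists_chainSys N hNcl hNuniv hNint habs (hKc s hs)).some
  -- enumerations of Q'-subsets of each U_s
  have hRex : ∀ s ∈ Fs, ∃ e : ℕ → Set Y, {Q | Q ∈ Q' ∧ Q ⊆ (KU s).2} = range e := by
    intro s hs
    exact (hQ'cnt.mono (fun Q hQ => hQ.1)).exists_eq_range
      ⟨∅, hQ'empty, empty_subset _⟩
  choose! ee hee using hRex
  have heemem : ∀ s ∈ Fs, ∀ k, ee s k ∈ Q' ∧ ee s k ⊆ (KU s).2 := by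
    intro s hs k
    have : ee s k ∈ {Q | Q ∈ Q' ∧ Q ⊆ (KU s).2} := (hee s hs) ▸ mem_range_self k
    exact this
  set R : Set C(X,Y) → ℕ → Set Y := fun s r => ⋃ k ∈ Finset.range (r+1), ee s k with hRdef
  have hRQ' : ∀ s ∈ Fs, ∀ r, R s r ∈ Q' ∧ R s r ⊆ (KU s).2 := by
    intro s hs r
    induction r with
    | zero =>
      have : R s 0 = ee s 0 := by simp [hRdef]
      rw [this]; exact heemem s hs 0
    | succ n ih =>
      have : R s (n+1) = R s n ∪ ee s (n+1) := by
        simp only [hRdef]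
        rw [Finset.range_add_one, Finset.set_biUnion_insert]
        exact Set.union_comm _ _
      rw [this]
      exact ⟨hQ'union _ ih.1 _ (heemem s hs (n+1)).1,
        union_subset ih.2 (heemem s hs (n+1)).2⟩
  have hRmono : ∀ s, ∀ k r, k ≤ r → ee s k ⊆ R s r := by
    intro s k r hkr
    exact subset_biUnion_of_mem (Finset.mem_range.2 (Nat.lt_succ_of_le hkr))
  -- tuples at every depth
  have htup : ∀ s : Set C(X,Y), ∀ hs : s ∈ Fs, ∀ r : ℕ,
      ∃ pcs : Set ((ℕ → ℕ → Bool) × ℕ × Set Y), pcs.Finite ∧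
      (∀ q ∈ pcs, q.1 ∈ (hCS s hs).L ∧ r ≤ q.2.1 ∧ q.2.2 ∈ Q' ∧
        MapsTo f (Tset N q.1 q.2.1) q.2.2 ∧ q.2.2 ⊆ (KU s).2 ∧ R s r ⊆ q.2.2) ∧
      (KU s).1 ⊆ ⋃ q ∈ pcs, Tset N q.1 q.2.1 := by
    intro s hs r
    exact exists_tuple (hCS s hs) h𝒬P hsub𝒬 hQ'cnt hQ'union f (hUo s hs) (hfD s hs)
      (hRQ' s hs r).1 (hRQ' s hs r).2 r
  choose! pcs hpcsfin hpcsprop hpcscov using htup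
  set Pr : ℕ → Set C(X, Y) := fun r =>
    {g | ∀ s, ∀ hs : s ∈ Fs, ∀ q ∈ pcs s r, MapsTo g (Tset N q.1 q.2.1) q.2.2} with hPrdef
  have hfPr : ∀ r, f ∈ Pr r := by
    intro r s hs q hq
    exact (hpcsprop s hs r q hq).2.2.2.1
  have hPrD : ∀ r, Pr r ⊆ ⋂₀ Fs := by
    intro r g hg
    rw [Set.mem_sInter]
    intro s hs
    rw [hseq s hs]
    intro x hx
    obtain ⟨q, hq, hxq⟩ := Set.mem_iUnion₂.1 (hpcscov s hs r hx)
    exact (hpcsprop s hs r q hq).2.2.2.2.1 (hg s hs q hq hxq)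
  have hPrPB : ∀ r, Pr r ∈ PB := by
    intro r
    have hW : (⋃ s ∈ Fs, pcs s r).Finite := hFfin.biUnion (fun s hs => hpcsfin s hs r)
    have hcode : ∀ q ∈ (⋃ s ∈ Fs, pcs s r), ∃ co : ℕ × Finset ℕ,
        N co.1 = Tset N q.1 q.2.1 ∧ Qe co.2 = q.2.2 := by
      intro q hq
      obtain ⟨s, hs, hqs⟩ := Set.mem_iUnion₂.1 hq
      obtain ⟨k, hk⟩ := (hCS s hs).TmemN q.1 (hpcsprop s hs r q hqs).1 q.2.1
      obtain ⟨F, hF⟩ := (hpcsprop s hs r q hqs).2.2.1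
      exact ⟨(k, F), hk, hF⟩
    choose! co hco1 hco2 using hcode
    refine ⟨(hW.toFinset.image co).toList, ?_⟩
    ext g
    simp only [hPPdef, hPrdef, mem_setOf_eq, Finset.mem_toList, Finset.mem_image,
      Set.Finite.mem_toFinset]
    constructor
    · intro h s hs q hq
      have hqW : q ∈ ⋃ s ∈ Fs, pcs s r := Set.mem_biUnion hs hq
      have h2 := h (co q) ⟨q, hqW, rfl⟩
      rwa [hco1 q hqW, hco2 q hqW] at h2
    · rintro h pr ⟨q, hqW, rfl⟩
      obtain ⟨s, hs, hqs⟩ := Set.mem_iUnion₂.1 hqW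
      rw [hco1 q hqW, hco2 q hqW]
      exact h s hs q hqs
  -- dispose of the non-accumulating case
  by_cases hAcc : AccPt f (𝓟 A)
  swap
  · exact ⟨Pr 0, hPrPB 0, hfPr 0, (hPrD 0).trans hbO, fun h => absurd h hAcc⟩
  -- failure assumption
  by_contra hcon
  have hfail : ∀ P ∈ PB, f ∈ P → P ⊆ O → (P ∩ A).Finite := by
    intro P hP hfP hPO
    by_contra hinf
    exact hcon ⟨P, hP, hfP, hPO, fun _ => hinf⟩
  have hPrfin : ∀ r, (Pr r ∩ A).Finite := fun r =>
    hfail _ (hPrPB r) (hfPr r) ((hPrD r).trans hbO)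
  -- escape sets
  set esc : C(X, Y) → Set ℕ := fun a => {r | a ∉ Pr r} with hescdef
  -- witness extraction for "beta" members
  set Abeta : Set C(X, Y) := {a | a ∈ A ∧ (esc a).Nonempty ∧ (esc a).Finite} with hAbetadef
  have hescmem : ∀ a ∈ Abeta, a ∉ Pr (sSup (esc a)) :=
    fun a ha => Nat.sSup_mem ha.2.1 (ha.2.2.bddAbove)
  have hescgt : ∀ a ∈ Abeta, ∀ r, sSup (esc a) < r → a ∈ Pr r := by
    intro a ha r hr
    by_contra h
    exact absurd (le_csSup ha.2.2.bddAbove (h : r ∈ esc a)) (not_le.2 hr)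
  have hext : ∀ a ∈ Abeta, ∃ w : (Set C(X, Y)) × (((ℕ → ℕ → Bool) × ℕ × Set Y) × X),
      w.1 ∈ Fs ∧ w.2.1 ∈ pcs w.1 (sSup (esc a)) ∧ w.2.2 ∈ Tset N w.2.1.1 w.2.1.2.1 ∧
      a w.2.2 ∉ w.2.1.2.2 := by
    intro a ha
    have h := hescmem a ha
    simp only [hPrdef, mem_setOf_eq] at h
    push_neg at h
    obtain ⟨s, hs, q, hq, hmap⟩ := h
    have hz : ∃ z ∈ Tset N q.1 q.2.1, a z ∉ q.2.2 := by
      by_contra hno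
      push_neg at hno
      exact hmap fun x hx => hno x hx
    obtain ⟨z, hz1, hz2⟩ := hz
    exact ⟨(s, q, z), hs, hq, hz1, hz2⟩
  choose! wd hwd1 hwd2 hwd3 hwd4 using hext
  -- abbreviations
  set sfn : C(X, Y) → Set C(X, Y) := fun a => (wd a).1 with hsfndef
  set ch : C(X, Y) → (ℕ → ℕ → Bool) := fun a => (wd a).2.1.1 with hchdef
  set dp : C(X, Y) → ℕ := fun a => (wd a).2.1.2.1 with hdpdef
  set zz : C(X, Y) → X := fun a => (wd a).2.2 with hzzdef
  have hprop : ∀ a ∈ Abeta, ∀ hs : sfn a ∈ Fs,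
      (ch a) ∈ (hCS (sfn a) hs).L ∧ sSup (esc a) ≤ dp a ∧
      ((wd a).2.1.2.2 ⊆ (KU (sfn a)).2) ∧ R (sfn a) (sSup (esc a)) ⊆ (wd a).2.1.2.2 := by
    intro a ha hs
    have h := hpcsprop (sfn a) hs (sSup (esc a)) _ (hwd2 a ha)
    exact ⟨h.1, h.2.1, h.2.2.2.2.1, h.2.2.2.2.2⟩
  have hvesc : ∀ a ∈ Abeta, ∀ k ≤ sSup (esc a), a (zz a) ∉ ee (sfn a) k := by
    intro a ha k hk h
    exact hwd4 a ha ((hprop a ha (hwd1 a ha)).2.2.2 (hRmono (sfn a) k (sSup (esc a)) hk h))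
  have hscalefin : ∀ r : ℕ, {a | a ∈ Abeta ∧ sSup (esc a) ≤ r}.Finite := by
    intro r
    have hsub : {a | a ∈ Abeta ∧ sSup (esc a) ≤ r} ⊆
        ⋃ k ∈ Finset.range (r + 1), (Pr (k + 1) ∩ A) := by
      rintro a ⟨ha, hle⟩
      refine Set.mem_biUnion (Finset.mem_range.2 (Nat.lt_succ_of_le hle)) ?_
      exact ⟨hescgt a ha _ (Nat.lt_succ_of_le le_rfl), ha.1⟩
    exact (Set.Finite.biUnion (Finset.range (r+1)).finite_toSet
      (fun k _ => hPrfin (k + 1))).subset hsub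
  have hchmem : ∀ s, ∀ hs : s ∈ Fs, ∀ a ∈ Abeta, sfn a = s → ch a ∈ (hCS s hs).L := by
    intro s hs a ha h
    subst h
    exact (hprop a ha hs).1
  have hdephelp : ∀ B : Set C(X, Y), B ⊆ Abeta → ∀ r, {a | a ∈ B ∧ dp a ≤ r}.Finite := by
    intro B hB r
    refine (hscalefin r).subset ?_
    rintro a ⟨haB, hdpa⟩
    exact ⟨hB haB, le_trans (hprop a (hB haB) (hwd1 a (hB haB))).2.1 hdpa⟩
  set kept : Set C(X, Y) → Set C(X, Y) := fun s =>
    {a | a ∈ Abeta ∧ sfn a = s ∧ f (zz a) ∈ (KU s).2} with hkeptdef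
  have hdrop : ∀ s, ∀ hs : s ∈ Fs,
      {a | a ∈ Abeta ∧ sfn a = s ∧ f (zz a) ∉ (KU s).2}.Finite := by
    intro s hs
    rw [← Set.not_infinite]
    intro hinf
    obtain ⟨x, hxK, hx⟩ := cluster_lemma (hCS s hs) hinf
      (p := ch) (fun a ha => hchmem s hs a ha.1 ha.2.1)
      (dep := dp) (hdephelp _ (fun a ha => ha.1) )
      (z := zz) (fun a ha => hwd3 a ha.1)
    have hxG : x ∈ f ⁻¹' (KU s).2 := hfD s hs hxK
    obtain ⟨a, ha⟩ := (hx (f ⁻¹' (KU s).2) ((hUo s hs).preimage f.continuous) hxG).nonempty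
    exact ha.1.2.2 ha.2
  set Cs : Set C(X, Y) → Set X := fun s => (KU s).1 ∪ (zz '' kept s) with hCsdef
  have hCscomp : ∀ s, ∀ hs : s ∈ Fs, IsCompact (Cs s) := by
    intro s hs
    refine isCompact_of_finite_subcover ?_
    intro ι Uo hUoo hcov
    obtain ⟨t₀, ht₀⟩ := (hKc s hs).elim_finite_subcover Uo hUoo
      ((subset_union_left).trans hcov)
    have hBAD : {a | a ∈ kept s ∧ zz a ∉ ⋃ i ∈ t₀, Uo i}.Finite := by
      rw [← Set.not_infinite]
      intro hinf
      obtain ⟨x, hxK, hx⟩ := cluster_lemma (hCS s hs) hinf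
        (p := ch) (fun a ha => hchmem s hs a ha.1.1 ha.1.2.1)
        (dep := dp) (hdephelp _ (fun a ha => ha.1.1))
        (z := zz) (fun a ha => hwd3 a ha.1.1)
      have hxG : x ∈ ⋃ i ∈ t₀, Uo i := ht₀ hxK
      obtain ⟨a, ha⟩ := (hx _ (isOpen_biUnion fun i _ => hUoo i) hxG).nonempty
      exact ha.1.2 ha.2
    have hidx : ∀ a ∈ {a | a ∈ kept s ∧ zz a ∉ ⋃ i ∈ t₀, Uo i}, ∃ i, zz a ∈ Uo i := by
      intro a ha
      exact mem_iUnion.1 (hcov (Or.inr (mem_image_of_mem zz ha.1)))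
    rcases Set.eq_empty_or_nonempty {a | a ∈ kept s ∧ zz a ∉ ⋃ i ∈ t₀, Uo i} with hBe | hBne
    · refine ⟨t₀, ?_⟩
      rintro x (hxK | ⟨a, haK, rfl⟩)
      · exact ht₀ hxK
      · by_cases hxG : zz a ∈ ⋃ i ∈ t₀, Uo i
        · exact hxG
        · exact absurd (Set.eq_empty_iff_forall_notMem.1 hBe a ⟨haK, hxG⟩) (fun h => h)
    · obtain ⟨a₀, ha₀⟩ := hBne
      haveI : Nonempty ι := ⟨(hidx a₀ ha₀).choose⟩
      choose! idx hidx' using hidx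
      refine ⟨t₀ ∪ hBAD.toFinset.image idx, ?_⟩
      have hmono : (⋃ i ∈ t₀, Uo i) ⊆ ⋃ i ∈ t₀ ∪ hBAD.toFinset.image idx, Uo i :=
        biUnion_subset_biUnion_left (by exact_mod_cast Finset.subset_union_left)
      rintro x (hxK | ⟨a, haK, rfl⟩)
      · exact hmono (ht₀ hxK)
      · by_cases hxG : zz a ∈ ⋃ i ∈ t₀, Uo i
        · exact hmono hxG
        · have haB : a ∈ {a | a ∈ kept s ∧ zz a ∉ ⋃ i ∈ t₀, Uo i} := ⟨haK, hxG⟩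
          exact mem_biUnion
            (Finset.mem_union_right _ (Finset.mem_image_of_mem idx (hBAD.mem_toFinset.2 haB)))
            (hidx' a haB)
  have hVex : ∀ s, ∀ hs : s ∈ Fs, ∃ V : Set Y, IsOpen V ∧ f '' Cs s ⊆ V ∧
      {a | a ∈ kept s ∧ a (zz a) ∈ V}.Finite := by
    intro s hs
    by_contra hcon2
    push_neg at hcon2
    have hheavy : ∃ y ∈ f '' Cs s, ∀ W : Set Y, IsOpen W → y ∈ W →
        {a | a ∈ kept s ∧ a (zz a) ∈ W}.Infinite := by
      by_contra hno
      push_neg at hno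
      have hWy : ∀ y ∈ f '' Cs s, ∃ W, IsOpen W ∧ y ∈ W ∧
          {a | a ∈ kept s ∧ a (zz a) ∈ W}.Finite := by
        intro y hy
        obtain ⟨W, hWo, hyW, hfin⟩ := hno y hy
        exact ⟨W, hWo, hyW, hfin⟩
      choose! Wy hWyo hWym hWyf using hWy
      obtain ⟨t₁, ht₁m, ht₁c⟩ := ((hCscomp s hs).image f.continuous).elim_nhds_subcover Wy
        (fun y hy => (hWyo y hy).mem_nhds (hWym y hy))
      refine hcon2 (⋃ y ∈ t₁, Wy y) (isOpen_biUnion fun y hy => hWyo y (ht₁m y hy)) ht₁c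
        ((Set.Finite.biUnion t₁.finite_toSet (fun y hy => hWyf y (ht₁m y hy))).subset ?_)
      rintro a ⟨haK, haW⟩
      obtain ⟨y, hyt, hyW⟩ := mem_iUnion₂.1 haW
      exact mem_biUnion hyt ⟨haK, hyW⟩
    obtain ⟨y, hyim, hheavy'⟩ := hheavy
    have hyU : y ∈ (KU s).2 := by
      obtain ⟨c, hc, rfl⟩ := hyim
      rcases hc with hcK | ⟨a, haK, rfl⟩
      · exact hfD s hs hcK
      · exact haK.2.2
    obtain ⟨Q0, hQ0𝒬, hyQ0, hQ0U, -⟩ := h𝒬P {y} y (subset_closure rfl) _ (hUo s hs) hyU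
    obtain ⟨k₀, hk₀⟩ : ∃ k, ee s k = Q0 := by
      have hmem : Q0 ∈ {Q | Q ∈ Q' ∧ Q ⊆ (KU s).2} := ⟨hsub𝒬 hQ0𝒬, hQ0U⟩
      rwa [hee s hs] at hmem
    set VS : Set Y := (fun a => a (zz a)) '' kept s with hVSdef
    have hvne : ∀ a ∈ kept s, k₀ ≤ sSup (esc a) → a (zz a) ≠ y := by
      intro a ha hk h
      have hnot : a (zz a) ∉ ee (sfn a) k₀ := hvesc a ha.1 k₀ hk
      rw [ha.2.1, hk₀] at hnot
      exact hnot (h ▸ hyQ0)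
    have hgetmem : ∀ W : Set Y, IsOpen W → y ∈ W → ∃ v ∈ W ∩ VS, v ≠ y := by
      intro W hWo hyW
      have hinf := hheavy' W hWo hyW
      obtain ⟨a, ha⟩ := (hinf.diff (hscalefin k₀)).nonempty
      have hk : k₀ ≤ sSup (esc a) := by
        by_contra h
        exact ha.2 ⟨ha.1.1.1, le_of_not_ge h⟩
      exact ⟨a (zz a), ⟨ha.1.2, mem_image_of_mem _ ha.1.1⟩, hvne a ha.1.1 hk⟩
    have hclo : y ∈ closure VS := by
      rw [mem_closure_iff]
      intro o ho hyo
      obtain ⟨v, hv, -⟩ := hgetmem o ho hyo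
      exact ⟨v, hv.1, hv.2⟩
    have hacc : AccPt y (𝓟 VS) := by
      rw [accPt_iff_nhds]
      intro V hV
      obtain ⟨o, hoV, ho, hyo⟩ := mem_nhds_iff.1 hV
      obtain ⟨v, hv, hvne'⟩ := hgetmem o ho hyo
      exact ⟨v, ⟨hoV hv.1, hv.2⟩, hvne'⟩
    obtain ⟨Qs, hQs𝒬, hyQs, hQsU, hinfQ⟩ := h𝒬P VS y hclo _ (hUo s hs) hyU
    obtain ⟨ks, hks⟩ : ∃ k, ee s k = Qs := by
      have hmem : Qs ∈ {Q | Q ∈ Q' ∧ Q ⊆ (KU s).2} := ⟨hsub𝒬 hQs𝒬, hQsU⟩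
      rwa [hee s hs] at hmem
    have hsubQ : Qs ∩ VS ⊆ (fun a => a (zz a)) '' {a | a ∈ Abeta ∧ sSup (esc a) ≤ ks} := by
      rintro v ⟨hvQ, ⟨a, haK, rfl⟩⟩
      refine mem_image_of_mem _ ⟨haK.1, ?_⟩
      by_contra h
      have hk : ks ≤ sSup (esc a) := le_of_not_ge h
      have hnot := hvesc a haK.1 ks hk
      rw [haK.2.1, hks] at hnot
      exact hnot hvQ
    exact (((hscalefin ks).image _).subset hsubQ).not_infinite (hinfQ hacc)
  choose! Vs hVso hVsim hVsfin using hVex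
  -- the gamma kill
  have hkill : ∀ a : C(X, Y), (∀ s ∈ Fs, MapsTo a (KU s).1 (KU s).2) →
      ¬ (esc a).Infinite := by
    intro a haD hinfesc
    have hex2 : ∀ r ∈ esc a, ∃ w : (Set C(X, Y)) × (((ℕ → ℕ → Bool) × ℕ × Set Y) × X),
        w.1 ∈ Fs ∧ w.2.1 ∈ pcs w.1 r ∧ w.2.2 ∈ Tset N w.2.1.1 w.2.1.2.1 ∧
        a w.2.2 ∉ w.2.1.2.2 := by
      intro r hr
      have h : a ∉ Pr r := hr
      simp only [hPrdef, mem_setOf_eq] at h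
      push_neg at h
      obtain ⟨s, hs, q, hq, hmap⟩ := h
      have hz : ∃ z ∈ Tset N q.1 q.2.1, a z ∉ q.2.2 := by
        by_contra hno
        push_neg at hno
        exact hmap fun x hx => hno x hx
      obtain ⟨z, hz1, hz2⟩ := hz
      exact ⟨(s, q, z), hs, hq, hz1, hz2⟩
    choose! wb hwb1 hwb2 hwb3 hwb4 using hex2
    have hpig : ∃ s ∈ Fs, {r | r ∈ esc a ∧ (wb r).1 = s}.Infinite := by
      by_contra hno
      push_neg at hno
      have hsub2 : esc a ⊆ ⋃ s ∈ Fs, {r | r ∈ esc a ∧ (wb r).1 = s} :=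
        fun r hr => mem_biUnion (hwb1 r hr) ⟨hr, rfl⟩
      exact hinfesc ((hFfin.biUnion (fun s hs => (hno s hs))).subset hsub2)
    obtain ⟨s, hs, hBinf⟩ := hpig
    have hCSL : ∀ s1 (h : s1 = s) (hs1 : s1 ∈ Fs) (χ : ℕ → ℕ → Bool),
        χ ∈ (hCS s1 hs1).L → χ ∈ (hCS s hs).L := by
      intro s1 h hs1 χ
      subst h
      exact id
    have hesc2 : ∀ r ∈ {r | r ∈ esc a ∧ (wb r).1 = s}, ∀ k ≤ r, a ((wb r).2.2) ∉ ee s k := by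
      rintro r ⟨hr, hrs⟩ k hk h
      have hsubR := (hpcsprop (wb r).1 (hwb1 r hr) r _ (hwb2 r hr)).2.2.2.2.2
      rw [hrs] at hsubR
      exact hwb4 r hr (hsubR (hRmono s k r hk h))
    obtain ⟨x, hxK, hx⟩ := cluster_lemma (hCS s hs) hBinf
      (p := fun r => (wb r).2.1.1)
      (fun r hr => hCSL (wb r).1 hr.2 (hwb1 r hr.1) _
        (hpcsprop (wb r).1 (hwb1 r hr.1) r _ (hwb2 r hr.1)).1)
      (dep := fun r => (wb r).2.1.2.1)
      (fun m => (Set.finite_Iic m).subset (fun r hr => by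
        have := (hpcsprop (wb r).1 (hwb1 r hr.1.1) r _ (hwb2 r hr.1.1)).2.1
        exact mem_Iic.2 (le_trans this hr.2)))
      (z := fun r => (wb r).2.2)
      (fun r hr => hwb3 r hr.1)
    have hyU : a x ∈ (KU s).2 := haD s hs hxK
    obtain ⟨Q0, hQ0𝒬, hyQ0, hQ0U, -⟩ :=
      h𝒬P {a x} (a x) (subset_closure rfl) _ (hUo s hs) hyU
    obtain ⟨k₀, hk₀⟩ : ∃ k, ee s k = Q0 := by
      have hmem : Q0 ∈ {Q | Q ∈ Q' ∧ Q ⊆ (KU s).2} := ⟨hsub𝒬 hQ0𝒬, hQ0U⟩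
      rwa [hee s hs] at hmem
    set VS2 : Set Y := (fun r => a ((wb r).2.2)) '' {r | r ∈ esc a ∧ (wb r).1 = s} with hVS2def
    have hvne2 : ∀ r ∈ {r | r ∈ esc a ∧ (wb r).1 = s}, k₀ ≤ r → a ((wb r).2.2) ≠ a x := by
      intro r hr hk h
      exact hesc2 r hr k₀ hk (hk₀.symm ▸ (h ▸ hyQ0))
    have hget2 : ∀ W : Set Y, IsOpen W → a x ∈ W → ∃ v ∈ W ∩ VS2, v ≠ a x := by
      intro W hWo hyW
      have hinf2 := hx (a ⁻¹' W) (hWo.preimage a.continuous) hyW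
      obtain ⟨r, hr⟩ := (hinf2.diff (Set.finite_Iic k₀)).nonempty
      have hk : k₀ ≤ r := le_of_not_ge (fun h => hr.2 (mem_Iic.2 h))
      exact ⟨a ((wb r).2.2), ⟨hr.1.2, mem_image_of_mem _ hr.1.1⟩, hvne2 r hr.1.1 hk⟩
    have hclo2 : a x ∈ closure VS2 := by
      rw [mem_closure_iff]
      intro o ho hyo
      obtain ⟨v, hv, -⟩ := hget2 o ho hyo
      exact ⟨v, hv.1, hv.2⟩
    have hacc2 : AccPt (a x) (𝓟 VS2) := by
      rw [accPt_iff_nhds]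
      intro V hV
      obtain ⟨o, hoV, ho, hyo⟩ := mem_nhds_iff.1 hV
      obtain ⟨v, hv, hvne'⟩ := hget2 o ho hyo
      exact ⟨v, ⟨hoV hv.1, hv.2⟩, hvne'⟩
    obtain ⟨Qs, hQs𝒬, hyQs, hQsU, hinfQ⟩ := h𝒬P VS2 (a x) hclo2 _ (hUo s hs) hyU
    obtain ⟨ks, hks⟩ : ∃ k, ee s k = Qs := by
      have hmem : Qs ∈ {Q | Q ∈ Q' ∧ Q ⊆ (KU s).2} := ⟨hsub𝒬 hQs𝒬, hQsU⟩
      rwa [hee s hs] at hmem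
    have hsubQ2 : Qs ∩ VS2 ⊆ (fun r => a ((wb r).2.2)) '' (Iio ks) := by
      rintro v ⟨hvQ, ⟨r, hrB, rfl⟩⟩
      refine mem_image_of_mem _ ?_
      rw [mem_Iio]
      by_contra h
      exact hesc2 r hrB ks (le_of_not_gt h) (hks.symm ▸ hvQ)
    exact (((Set.finite_Iio ks).image _).subset hsubQ2).not_infinite (hinfQ hacc2)
  -- final contradiction
  set G : Set C(X, Y) :=
    (⋂₀ Fs) ∩ ⋂ s ∈ Fs, {g : C(X, Y) | MapsTo g (Cs s) (Vs s)} with hGdef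
  have hGopen : IsOpen G := by
    refine IsOpen.inter ?_ (hFfin.isOpen_biInter fun s hs =>
      ContinuousMap.isOpen_setOf_mapsTo (hCscomp s hs) (hVso s hs))
    have heq : ⋂₀ Fs = ⋂ s ∈ Fs, s := by simp [sInter_eq_biInter]
    rw [heq]
    refine hFfin.isOpen_biInter fun s hs => ?_
    rw [hseq s hs]
    exact ContinuousMap.isOpen_setOf_mapsTo (hKc s hs) (hUo s hs)
  have hfG : f ∈ G := by
    refine ⟨hfb, mem_iInter₂.2 fun s hs => ?_⟩
    intro x hx
    exact hVsim s hs (mem_image_of_mem f hx)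
  have hGA : (G ∩ A).Infinite :=
    accPt_nhds_infinite ck_sep hAcc (hGopen.mem_nhds hfG)
  have hGAfin : (G ∩ A).Finite := by
    have hsub : G ∩ A ⊆ (Pr 0 ∩ A) ∪ ⋃ s ∈ Fs,
        ({a | a ∈ Abeta ∧ sfn a = s ∧ f (zz a) ∉ (KU s).2} ∪
         {a | a ∈ kept s ∧ a (zz a) ∈ Vs s}) := by
      rintro a ⟨haG, haA⟩
      have haD : ∀ s ∈ Fs, MapsTo a (KU s).1 (KU s).2 := by
        intro s hs
        have h2 := (Set.mem_sInter.1 haG.1) s hs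
        rwa [hseq s hs] at h2
      rcases Set.eq_empty_or_nonempty (esc a) with hesc0 | hesc0
      · left
        refine ⟨?_, haA⟩
        by_contra h
        exact absurd (hesc0 ▸ (h : (0 : ℕ) ∈ esc a) : (0 : ℕ) ∈ (∅ : Set ℕ)) (Set.notMem_empty 0)
      · have hfin : (esc a).Finite := by
          by_contra hinf
          exact hkill a haD hinf
        have haB : a ∈ Abeta := ⟨haA, hesc0, hfin⟩
        have hsfn : sfn a ∈ Fs := hwd1 a haB
        by_cases hk : f (zz a) ∈ (KU (sfn a)).2
        · right
          refine mem_biUnion hsfn (Or.inr ⟨⟨haB, rfl, hk⟩, ?_⟩)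
          have hmt : MapsTo a (Cs (sfn a)) (Vs (sfn a)) :=
            (mem_iInter₂.1 haG.2) (sfn a) hsfn
          exact hmt (Or.inr (mem_image_of_mem zz ⟨haB, rfl, hk⟩))
        · right
          exact mem_biUnion hsfn (Or.inl ⟨haB, rfl, hk⟩)
    refine ((hPrfin 0).union (Set.Finite.biUnion hFfin fun s hs =>
      ((hdrop s hs).union (hVsfin s hs)))).subset hsub
  exact hGA hGAfin
end
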